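/- arXiv:1906.08571 — 4 statements merged into one kernel-verified Lean document; each statement's English description precedes it below -/
import Mathlib

section
/- Consider the optimal control problem: minimize f₀(x(t₁)) over trajectories of the system ẋ = φ(t,x,u(t)), u(t) ∈ U a.e. on [t₀,t₁], with endpoint constraints x(t₀) = x₀ and g(x(t₁)) = 0. Assume U is compact and nonempty, the set of admissible trajectories is nonempty, and there exists a constant K > 0 such that |⟨x, φ(t,x,u)⟩| ≤ K(|x|² + 1) for all t ∈ [t₀,t₁], x ∈ ℝⁿ and u ∈ U. Then the problem has a global infimum: there exists x̂ in the closure (in C([t₀,t₁],ℝⁿ)) of the set of admissible trajectories such that f₀(x̂(t₁)) ≤ f₀(x(t₁)) for every admissible trajectory x. -/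
open MeasureTheory Set intervalIntegral Filter Topology

noncomputable section

/-- `ℝⁿ` with the Euclidean norm. -/
abbrev En (n : ℕ) := EuclideanSpace ℝ (Fin n)

/-- An essentially bounded measurable control on `[t₀,t₁]` with values in `U` a.e. -/
def IsLinftyControl (t₀ t₁ : ℝ) {r : ℕ} (U : Set (En r)) (u : ℝ → En r) : Prop :=
  Measurable u ∧ (∃ C : ℝ, ∀ᵐ t ∂(volume.restrict (Icc t₀ t₁)), ‖u t‖ ≤ C) ∧
    ∀ᵐ t ∂(volume.restrict (Icc t₀ t₁)), u t ∈ U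

/-- A trajectory `x` is admissible for `ẋ = φ(t,x,u(t))`, `u(t) ∈ U` a.e.,
`x(t₀) = x₀`, `g(x(t₁)) = 0`, if there is an `L∞` control realizing it
(the ODE being understood in the integral form, `x` being absolutely continuous). -/
def Admissible (t₀ t₁ : ℝ) {n r m : ℕ} (φ : ℝ → En n → En r → En n)
    (U : Set (En r)) (x₀ : En n) (g : En n → En m) (x : ℝ → En n) : Prop :=
  ∃ u : ℝ → En r, IsLinftyControl t₀ t₁ U u ∧
    (∀ t ∈ Icc t₀ t₁, x t = x₀ + ∫ s in t₀..t, φ s (x s) (u s)) ∧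
    g (x t₁) = 0

/-! If `x` has velocity `F` with `‖F‖ ≤ D` and `⟪x, F⟫ ≤ K (‖x‖² + 1)`, then for `s < z`
`‖x z‖² - ‖x s‖² ≤ (z - s) (2K (‖x s‖² + 1) + O(z - s))`, at every `s` and not only almost
everywhere; so Grönwall's inequality applies to `‖x‖²` and bounds all admissible trajectories
uniformly, hence also their speeds. They thus form a uniformly bounded, equicontinuous family,
whose closure in `C([t₀,t₁],ℝⁿ)` is compact by Arzelà–Ascoli, and the continuous functional
`x ↦ f₀(x(t₁))` attains its minimum on that closure. -/

open scoped NNReal BoundedContinuousFunction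

section IntegralCurve

variable {E : Type*} [NormedAddCommGroup E] {x F : ℝ → E} {a b : ℝ}

theorem sub_eq_integral_of_eq_add_integral [NormedSpace ℝ E]
    (hF : IntervalIntegrable F volume a b) (hx : ∀ t ∈ Icc a b, x t = x a + ∫ τ in a..t, F τ)
    {s t : ℝ} (hs : s ∈ Icc a b)
    (ht : t ∈ Icc a b) : x t - x s = ∫ τ in s..t, F τ := by
  have hF' : ∀ c ∈ Icc a b, IntervalIntegrable F volume a c := fun c hc =>
    hF.mono_set (uIcc_subset_uIcc left_mem_uIcc (Icc_subset_uIcc hc))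
  rw [hx t ht, hx s hs, ← integral_interval_sub_left (hF' t ht) (hF' s hs)]
  abel

theorem lipschitzOnWith_of_eq_add_integral [NormedSpace ℝ E] {D : ℝ≥0}
    (hF : IntervalIntegrable F volume a b) (hFD : ∀ s ∈ Icc a b, ‖F s‖ ≤ D)
    (hx : ∀ t ∈ Icc a b, x t = x a + ∫ τ in a..t, F τ) :
    LipschitzOnWith D x (Icc a b) := by
  refine LipschitzOnWith.of_dist_le_mul fun t ht s hs => ?_
  rw [dist_eq_norm, sub_eq_integral_of_eq_add_integral hF hx hs ht, Real.dist_eq]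
  exact norm_integral_le_of_norm_le_const fun τ hτ =>
    hFD τ (uIoc_subset_uIcc.trans (uIcc_subset_Icc hs ht) hτ)

variable [InnerProductSpace ℝ E] [CompleteSpace E] {K : ℝ} {D : ℝ≥0}

theorem norm_sq_sub_le_of_inner_le (hK : 0 ≤ K) (hF : IntervalIntegrable F volume a b)
    (hFD : ∀ s ∈ Icc a b, ‖F s‖ ≤ D) (hx : ∀ t ∈ Icc a b, x t = x a + ∫ τ in a..t, F τ)
    (hinner : ∀ s ∈ Icc a b, inner ℝ (x s) (F s) ≤ K * (‖x s‖ ^ 2 + 1))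
    {s z : ℝ} (has : a ≤ s) (hsz : s ≤ z) (hzb : z ≤ b) :
    ‖x z‖ ^ 2 - ‖x s‖ ^ 2 ≤
      (z - s) * (2 * K * ((‖x s‖ + D * (z - s)) ^ 2 + 1) + 3 * D ^ 2 * (z - s)) := by
  set δ := z - s
  have hs : s ∈ Icc a b := ⟨has, hsz.trans hzb⟩
  have hsub : Icc s z ⊆ Icc a b := Icc_subset_Icc has hzb
  have hclose : ∀ τ ∈ Icc s z, ‖x τ - x s‖ ≤ D * δ := fun τ hτ => by
    rw [← dist_eq_norm]
    calc dist (x τ) (x s) ≤ D * dist τ s :=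
          (lipschitzOnWith_of_eq_add_integral hF hFD hx).dist_le_mul τ (hsub hτ) s hs
      _ ≤ D * δ := by
          rw [Real.dist_eq, abs_of_nonneg (sub_nonneg.2 hτ.1)]
          exact mul_le_mul_of_nonneg_left (sub_le_sub_right hτ.2 s) D.2
  set c := K * ((‖x s‖ + D * δ) ^ 2 + 1) + D ^ 2 * δ
  -- `x` moves by `O(δ)` on `[s, z]`, so the one-sided growth bound at `x τ` transfers to `x s`.
  have hpoint : ∀ τ ∈ Icc s z, inner ℝ (x s) (F τ) ≤ c := fun τ hτ => by
    have hτ' := hsub hτ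
    have h₁ : ‖x τ‖ ≤ ‖x s‖ + D * δ := (norm_le_insert' _ _).trans (by gcongr; exact hclose τ hτ)
    have h₂ : -(D * δ * D) ≤ inner ℝ (x τ - x s) (F τ) := by
      refine neg_le_of_abs_le ((abs_real_inner_le_norm _ _).trans ?_)
      exact mul_le_mul (hclose τ hτ) (hFD τ hτ') (norm_nonneg _) (by positivity)
    have h₃ : K * ‖x τ‖ ^ 2 ≤ K * (‖x s‖ + D * δ) ^ 2 := by gcongr
    have := hinner τ hτ'
    rw [inner_sub_left] at h₂
    nlinarith
  have hF' : IntervalIntegrable F volume s z :=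
    hF.mono_set (uIcc_subset_uIcc (Icc_subset_uIcc hs) (Icc_subset_uIcc ⟨hs.1.trans hsz, hzb⟩))
  have hinc : inner ℝ (x s) (x z - x s) ≤ δ * c := by
    rw [sub_eq_integral_of_eq_add_integral hF hx hs ⟨hs.1.trans hsz, hzb⟩,
      integral_of_le hsz, ← integral_inner hF'.1, ← integral_of_le hsz]
    calc ∫ τ in s..z, inner ℝ (x s) (F τ) ≤ ∫ _ in s..z, c :=
          integral_mono_on hsz
            ((intervalIntegrable_iff_integrableOn_Ioc_of_le hsz).2 (hF'.1.const_inner (x s)))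
            intervalIntegrable_const hpoint
      _ = δ * c := by simp [δ]
  have hsq : ‖x z - x s‖ ^ 2 ≤ (D * δ) ^ 2 := by
    gcongr
    exact hclose z ⟨hsz, le_rfl⟩
  have hexp : ‖x z‖ ^ 2 = ‖x s‖ ^ 2 + 2 * inner ℝ (x s) (x z - x s) + ‖x z - x s‖ ^ 2 := by
    rw [← norm_add_sq_real, add_sub_cancel]
  rw [hexp]
  nlinarith

theorem norm_sq_le_gronwallBound_of_inner_le (hK : 0 ≤ K) (hF : IntervalIntegrable F volume a b)
    (hFD : ∀ s ∈ Icc a b, ‖F s‖ ≤ D) (hx : ∀ t ∈ Icc a b, x t = x a + ∫ τ in a..t, F τ)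
    (hinner : ∀ s ∈ Icc a b, inner ℝ (x s) (F s) ≤ K * (‖x s‖ ^ 2 + 1)) :
    ∀ t ∈ Icc a b, ‖x t‖ ^ 2 ≤ gronwallBound (‖x a‖ ^ 2) (2 * K) (2 * K) (t - a) := by
  refine le_gronwallBound_of_liminf_deriv_right_le (f' := fun s => 2 * K * (‖x s‖ ^ 2 + 1))
    ((lipschitzOnWith_of_eq_add_integral hF hFD hx).continuousOn.norm.pow 2)
    (fun s hs r hr => ?_) le_rfl fun s _ => le_of_eq (by ring)
  set slopeBound : ℝ → ℝ := fun z => 2 * K * ((‖x s‖ + D * (z - s)) ^ 2 + 1) + 3 * D ^ 2 * (z - s)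
  have hlt : ∀ᶠ z in 𝓝[>] s, slopeBound z < r := by
    refine nhdsWithin_le_nhds ((Continuous.tendsto (by fun_prop) s).eventually (gt_mem_nhds ?_))
    simpa [slopeBound] using hr
  refine (hlt.and (Ioc_mem_nhdsGT hs.2)).frequently.mono fun z ⟨hz, hsz⟩ => ?_
  refine lt_of_le_of_lt ((inv_mul_le_iff₀ (sub_pos.2 hsz.1)).2 ?_) hz
  exact norm_sq_sub_le_of_inner_le hK hF hFD hx hinner hs.1 hsz.1.le hsz.2

end IntegralCurve

-- Up to the supremum of `{c | IntegrableOn F (Ioc a c)}` the norm bound alone gives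
-- integrability; beyond it `F = G`, which supplies the missing measurability.
theorem integrableOn_Ioc_of_eq_of_not_integrableOn {E : Type*} [NormedAddCommGroup E]
    {F G : ℝ → E} {a b D : ℝ} (hFD : ∀ s ∈ Ioc a b, ‖F s‖ ≤ D)
    (hG : AEStronglyMeasurable G (volume.restrict (Ioc a b)))
    (hFG : ∀ c ∈ Ioc a b, ¬ IntegrableOn F (Ioc a c) → F c = G c) :
    IntegrableOn F (Ioc a b) := by
  rcases le_or_gt b a with hba | hab
  · simp [Ioc_eq_empty_of_le hba]
  set A := {c ∈ Icc a b | IntegrableOn F (Ioc a c)}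
  have haA : a ∈ A := ⟨left_mem_Icc.2 hab.le, by simp⟩
  have hAbdd : BddAbove A := ⟨b, fun c hc => hc.1.2⟩
  have hτ : sSup A ∈ Icc a b := ⟨le_csSup hAbdd haA, csSup_le ⟨a, haA⟩ fun c hc => hc.1.2⟩
  have hD : 0 ≤ D := (norm_nonneg _).trans (hFD b (right_mem_Ioc.2 hab))
  have hleft : IntegrableOn F (Ioc a (sSup A)) := by
    obtain ⟨c, -, hc, hcA⟩ := exists_seq_tendsto_sSup ⟨a, haA⟩ hAbdd
    refine integrableOn_Ioc_of_intervalIntegral_norm_bounded (I := D * (b - a))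
      (fun n => (hcA n).2) tendsto_const_nhds hc (Eventually.of_forall fun n => ?_)
    have hsub : Ioc a (c n) ⊆ Ioc a b := Ioc_subset_Ioc_right (hcA n).1.2
    calc (∫ s in Ioc a (c n), ‖F s‖) ≤ D * volume.real (Ioc a (c n)) :=
          (Real.le_norm_self _).trans <| norm_setIntegral_le_of_norm_le_const (f := fun s => ‖F s‖)
            measure_Ioc_lt_top fun s hs => by simpa using hFD s (hsub hs)
      _ ≤ D * (b - a) := by
          rw [Real.volume_real_Ioc]
          gcongr
          exact max_le (sub_le_sub_right (hcA n).1.2 a) (by linarith)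
  have hright : IntegrableOn F (Ioc (sSup A) b) := by
    have hEq : EqOn F G (Ioc (sSup A) b) := fun c hc =>
      hFG c ⟨hτ.1.trans_lt hc.1, hc.2⟩ fun hint =>
        hc.1.not_ge (le_csSup hAbdd ⟨⟨hτ.1.trans hc.1.le, hc.2⟩, hint⟩)
    rw [integrableOn_congr_fun hEq measurableSet_Ioc]
    refine IntegrableOn.of_bound measure_Ioc_lt_top
      (hG.mono_measure (Measure.restrict_mono (Ioc_subset_Ioc_left hτ.1) le_rfl)) D ?_
    filter_upwards [ae_restrict_mem measurableSet_Ioc] with s hs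
    exact hEq hs ▸ hFD s ⟨hτ.1.trans_lt hs.1, hs.2⟩
  simpa [Ioc_union_Ioc_eq_Ioc hτ.1 hτ.2] using hleft.union hright

theorem exists_forall_le_of_lipschitzOnWith {E : Type*} [MetricSpace E] {a b : ℝ} (hab : a ≤ b)
    {C : Set E} (hC : IsCompact C) {D : ℝ≥0} {S : Set (ℝ → E)} (hS : S.Nonempty)
    (hSC : ∀ x ∈ S, MapsTo x (Icc a b) C) (hSD : ∀ x ∈ S, LipschitzOnWith D x (Icc a b))
    {J : E → ℝ} (hJ : Continuous J) :
    ∃ xh : ℝ → E, ContinuousOn xh (Icc a b) ∧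
      (∀ ε > 0, ∃ x ∈ S, ∀ t ∈ Icc a b, dist (x t) (xh t) < ε) ∧
      ∀ x ∈ S, J (xh b) ≤ J (x b) := by
  have : CompactSpace (Icc a b) := isCompact_iff_compactSpace.1 isCompact_Icc
  set A : Set (Icc a b →ᵇ E) := {f | ∃ x ∈ S, ∀ t : Icc a b, f t = x t}
  have hmemA : ∀ x ∈ S, ∃ f ∈ A, ∀ t : Icc a b, f t = x t := fun x hx =>
    ⟨.mkOfCompact ⟨(Icc a b).domRestrict x, (hSD x hx).continuousOn.domRestrict⟩,
      ⟨x, hx, fun _ => rfl⟩, fun _ => rfl⟩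
  have hequi : Equicontinuous ((↑) : A → Icc a b → E) := by
    refine (LipschitzWith.uniformEquicontinuous _ D fun ⟨f, x, hx, hfx⟩ => ?_).equicontinuous
    refine LipschitzWith.of_dist_le_mul fun s t => ?_
    rw [hfx s, hfx t]
    exact (hSD x hx).dist_le_mul s s.2 t t.2
  have hcompact : IsCompact (closure A) :=
    BoundedContinuousFunction.arzela_ascoli C hC A
      (fun f t ⟨x, hx, hfx⟩ => hfx t ▸ hSC x hx t.2) hequi
  obtain ⟨x₁, hx₁⟩ := hS
  obtain ⟨f₁, hf₁, -⟩ := hmemA x₁ hx₁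
  let tb : Icc a b := ⟨b, right_mem_Icc.2 hab⟩
  obtain ⟨fh, hfh, hmin⟩ := hcompact.exists_isMinOn ⟨f₁, subset_closure hf₁⟩
    (hJ.comp (continuous_eval_const tb)).continuousOn
  refine ⟨fun t => fh (projIcc a b hab t), (fh.continuous.comp continuous_projIcc).continuousOn,
    fun ε hε => ?_, fun x hx => ?_⟩
  · obtain ⟨f, ⟨x, hx, hfx⟩, hdist⟩ := Metric.mem_closure_iff.1 hfh ε hε
    refine ⟨x, hx, fun t ht => ?_⟩
    dsimp only
    rw [projIcc_of_mem hab ht, ← hfx ⟨t, ht⟩, dist_comm]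
    exact (BoundedContinuousFunction.dist_coe_le_dist _).trans_lt hdist
  · obtain ⟨f, hf, hfx⟩ := hmemA x hx
    simpa [projIcc_right, tb, hfx] using hmin (subset_closure hf)

section ControlSystem

variable {t₀ t₁ : ℝ} {n r : ℕ} {φ : ℝ → En n → En r → En n} {U : Set (En r)} {x₀ : En n}

theorem IsLinftyControl.exists_forall_mem_ae_eq {u : ℝ → En r} (hu : IsLinftyControl t₀ t₁ U u)
    (hU : MeasurableSet U) (hUne : U.Nonempty) :
    ∃ v : ℝ → En r, Measurable v ∧ (∀ t, v t ∈ U) ∧ v =ᵐ[volume.restrict (Icc t₀ t₁)] u := by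
  classical
  obtain ⟨hmeas, -, hmem⟩ := hu
  obtain ⟨v₀, hv₀⟩ := hUne
  refine ⟨fun t => if u t ∈ U then u t else v₀, hmeas.ite (hmeas hU) measurable_const,
    fun t => ?_, ?_⟩
  · dsimp only
    split_ifs with h
    exacts [h, hv₀]
  · filter_upwards [hmem] with t ht
    simp [ht]

theorem exists_norm_le_of_continuous
    (hφ : Continuous fun p : ℝ × En n × En r => φ p.1 p.2.1 p.2.2) (hU : IsCompact U)
    (t₀ t₁ ρ : ℝ) :
    ∃ D : ℝ≥0, ∀ s ∈ Icc t₀ t₁, ∀ y : En n, ‖y‖ ≤ ρ → ∀ v ∈ U, ‖φ s y v‖ ≤ D := by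
  obtain ⟨D, hD⟩ := (isCompact_Icc.prod ((isCompact_closedBall 0 ρ).prod hU))
    |>.exists_bound_of_continuousOn hφ.continuousOn
  exact ⟨D.toNNReal, fun s hs y hy v hv =>
    (hD (s, y, v) ⟨hs, mem_closedBall_zero_iff.2 hy, hv⟩).trans (Real.le_coe_toNNReal D)⟩

theorem norm_sq_le_gronwallBound_of_eq_add_integral
    (hφ : Continuous fun p : ℝ × En n × En r => φ p.1 p.2.1 p.2.2) (hU : IsCompact U)
    {K : ℝ} (hK : 0 ≤ K)
    (hgrowth : ∀ t ∈ Icc t₀ t₁, ∀ y : En n, ∀ v ∈ U, inner ℝ y (φ t y v) ≤ K * (‖y‖ ^ 2 + 1))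
    {v : ℝ → En r} (hvU : ∀ t, v t ∈ U) {x : ℝ → En n}
    (hx : ∀ t ∈ Icc t₀ t₁, x t = x₀ + ∫ s in t₀..t, φ s (x s) (v s)) :
    ∀ t ∈ Icc t₀ t₁, ‖x t‖ ^ 2 ≤ gronwallBound (‖x₀‖ ^ 2) (2 * K) (2 * K) (t - t₀) := by
  intro t ht
  by_cases hint : IntervalIntegrable (fun s => φ s (x s) (v s)) volume t₀ t
  · have hsub : Icc t₀ t ⊆ Icc t₀ t₁ := Icc_subset_Icc_right ht.2
    have hx₀ : x t₀ = x₀ := by simpa using hx t₀ (left_mem_Icc.2 (ht.1.trans ht.2))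
    have hx' : ∀ t' ∈ Icc t₀ t, x t' = x t₀ + ∫ s in t₀..t', φ s (x s) (v s) := fun t' ht' =>
      hx₀ ▸ hx t' (hsub ht')
    have hcont : ContinuousOn x (Icc t₀ t) := by
      refine (continuousOn_const.add ?_).congr hx'
      simpa [uIcc_of_le ht.1] using continuousOn_primitive_interval' hint left_mem_uIcc
    obtain ⟨B, hB⟩ := isCompact_Icc.exists_bound_of_continuousOn hcont
    obtain ⟨D, hD⟩ := exists_norm_le_of_continuous hφ hU t₀ t₁ B
    simpa [hx₀] using norm_sq_le_gronwallBound_of_inner_le hK hint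
      (fun s hs => hD s (hsub hs) _ (hB s hs) _ (hvU s)) hx'
      (fun s hs => hgrowth s (hsub hs) _ _ (hvU s)) t (right_mem_Icc.2 ht.1)
  · rw [hx t ht, intervalIntegral.integral_undef hint, add_zero]
    calc ‖x₀‖ ^ 2 = gronwallBound (‖x₀‖ ^ 2) (2 * K) (2 * K) 0 := (gronwallBound_x0 ..).symm
      _ ≤ _ := gronwallBound_mono (by positivity) (by positivity) (by positivity)
          (sub_nonneg.2 ht.1)

theorem exists_forall_admissible_mapsTo_closedBall_lipschitzOnWith {m : ℕ} {g : En n → En m}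
    (ht : t₀ ≤ t₁) (hφ : Continuous fun p : ℝ × En n × En r => φ p.1 p.2.1 p.2.2)
    (hUc : IsCompact U) (hUne : U.Nonempty) {K : ℝ} (hK : 0 ≤ K)
    (hgrowth : ∀ t ∈ Icc t₀ t₁, ∀ y : En n, ∀ v ∈ U, inner ℝ y (φ t y v) ≤ K * (‖y‖ ^ 2 + 1)) :
    ∃ (R : ℝ) (D : ℝ≥0), ∀ x, Admissible t₀ t₁ φ U x₀ g x →
      MapsTo x (Icc t₀ t₁) (Metric.closedBall 0 R) ∧ LipschitzOnWith D x (Icc t₀ t₁) := by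
  set R := √(gronwallBound (‖x₀‖ ^ 2) (2 * K) (2 * K) (t₁ - t₀))
  obtain ⟨D, hD⟩ := exists_norm_le_of_continuous hφ hUc t₀ t₁ R
  refine ⟨R, D, fun x ⟨u, hu, hxu, _⟩ => ?_⟩
  obtain ⟨v, hv, hvU, hvu⟩ := hu.exists_forall_mem_ae_eq hUc.isClosed.measurableSet hUne
  have hx : ∀ t ∈ Icc t₀ t₁, x t = x₀ + ∫ s in t₀..t, φ s (x s) (v s) := fun t ht' => by
    rw [hxu t ht']
    congr 1
    refine integral_congr_ae ?_
    filter_upwards [ae_restrict_iff' measurableSet_Icc |>.1 hvu] with s hs hsI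
    exact congrArg _
      (hs (uIoc_subset_uIcc.trans (uIcc_subset_Icc (left_mem_Icc.2 ht) ht') hsI)).symm
  have hxR : ∀ t ∈ Icc t₀ t₁, ‖x t‖ ≤ R := fun t ht' =>
    Real.le_sqrt_of_sq_le <| (norm_sq_le_gronwallBound_of_eq_add_integral hφ hUc hK hgrowth hvU hx
      t ht').trans <| gronwallBound_mono (by positivity) (by positivity) (by positivity)
        (sub_le_sub_right ht'.2 t₀)
  have hFD : ∀ s ∈ Icc t₀ t₁, ‖φ s (x s) (v s)‖ ≤ D := fun s hs => hD s hs _ (hxR s hs) _ (hvU s)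
  -- Where `fun τ => φ τ (x τ) (v τ)` is not integrable on `[t₀, s]`, the junk value `0` of the
  -- integral forces `x s = x₀`.
  have hint : IntervalIntegrable (fun s => φ s (x s) (v s)) volume t₀ t₁ := by
    rw [intervalIntegrable_iff_integrableOn_Ioc_of_le ht]
    refine integrableOn_Ioc_of_eq_of_not_integrableOn (G := fun s => φ s x₀ (v s))
      (fun s hs => hFD s (Ioc_subset_Icc_self hs))
      (hφ.measurable.comp (measurable_id.prodMk (measurable_const.prodMk hv))).aestronglyMeasurable
      fun c hc hnot => ?_
    rw [hx c (Ioc_subset_Icc_self hc), intervalIntegral.integral_undef, add_zero]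
    rwa [intervalIntegrable_iff_integrableOn_Ioc_of_le hc.1.le]
  have hx₀ : x t₀ = x₀ := by simpa using hx t₀ (left_mem_Icc.2 ht)
  exact ⟨fun t ht' => mem_closedBall_zero_iff.2 (hxR t ht'),
    lipschitzOnWith_of_eq_add_integral hint hFD (hx₀ ▸ hx)⟩

end ControlSystem

theorem existence_of_global_infimum_general
    (t₀ t₁ : ℝ) (ht : t₀ < t₁) (n r m : ℕ)
    (φ : ℝ → En n → En r → En n)
    (hφ : Continuous fun p : ℝ × En n × En r => φ p.1 p.2.1 p.2.2)
    (f₀ : En n → ℝ) (hf₀ : ContDiff ℝ 1 f₀)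
    (g : En n → En m)
    (U : Set (En r)) (hUc : IsCompact U) (hUne : U.Nonempty)
    (x₀ : En n)
    (hne : ∃ x, Admissible t₀ t₁ φ U x₀ g x)
    (K : ℝ) (hK : 0 < K)
    (hgrowth : ∀ t ∈ Icc t₀ t₁, ∀ x : En n, ∀ u ∈ U,
      |(inner ℝ x (φ t x u) : ℝ)| ≤ K * (‖x‖ ^ 2 + 1)) :
    -- there is a global infimum: a function in the closure (in `C([t₀,t₁],ℝⁿ)`)
    -- of the set of admissible trajectories minimizing `f₀(x(t₁))`
    ∃ xh : ℝ → En n, ContinuousOn xh (Icc t₀ t₁) ∧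
      (∀ ε > 0, ∃ x, Admissible t₀ t₁ φ U x₀ g x ∧ ∀ t ∈ Icc t₀ t₁, ‖x t - xh t‖ < ε) ∧
      ∀ x, Admissible t₀ t₁ φ U x₀ g x → f₀ (xh t₁) ≤ f₀ (x t₁) := by
  obtain ⟨R, D, hR⟩ := exists_forall_admissible_mapsTo_closedBall_lipschitzOnWith
    (x₀ := x₀) (g := g) ht.le hφ hUc hUne hK.le
    fun t htI y v hv => (le_abs_self _).trans (hgrowth t htI y v hv)
  obtain ⟨xh, hcont, happrox, hmin⟩ := exists_forall_le_of_lipschitzOnWith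
    (S := {x | Admissible t₀ t₁ φ U x₀ g x}) ht.le
    (isCompact_closedBall 0 R) hne (fun x hx => (hR x hx).1) (fun x hx => (hR x hx).2)
    hf₀.continuous
  exact ⟨xh, hcont, fun ε hε => by simpa only [dist_eq_norm, mem_ofPred_eq] using happrox ε hε,
    hmin⟩

/-- **Theorem 1 (existence of a global infimum).** -/
theorem existence_of_global_infimum
    (t₀ t₁ : ℝ) (ht : t₀ < t₁) (n r m : ℕ)
    (φ : ℝ → En n → En r → En n)
    (φx : ℝ → En n → En r → (En n →L[ℝ] En n))
    (hφ : Continuous fun p : ℝ × En n × En r => φ p.1 p.2.1 p.2.2)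
    (hφx : ∀ t x u, HasFDerivAt (fun y => φ t y u) (φx t x u) x)
    (hφxc : Continuous fun p : ℝ × En n × En r => φx p.1 p.2.1 p.2.2)
    (f₀ : En n → ℝ) (hf₀ : ContDiff ℝ 1 f₀)
    (g : En n → En m) (hg : ContDiff ℝ 1 g)
    (U : Set (En r)) (hUc : IsCompact U) (hUne : U.Nonempty)
    (x₀ : En n)
    (hne : ∃ x, Admissible t₀ t₁ φ U x₀ g x)
    (K : ℝ) (hK : 0 < K)
    (hgrowth : ∀ t ∈ Icc t₀ t₁, ∀ x : En n, ∀ u ∈ U,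
      |(inner ℝ x (φ t x u) : ℝ)| ≤ K * (‖x‖ ^ 2 + 1)) :
    -- there is a global infimum: a function in the closure (in `C([t₀,t₁],ℝⁿ)`)
    -- of the set of admissible trajectories minimizing `f₀(x(t₁))`
    ∃ xh : ℝ → En n, ContinuousOn xh (Icc t₀ t₁) ∧
      (∀ ε > 0, ∃ x, Admissible t₀ t₁ φ U x₀ g x ∧ ∀ t ∈ Icc t₀ t₁, ‖x t - xh t‖ < ε) ∧
      ∀ x, Admissible t₀ t₁ φ U x₀ g x → f₀ (xh t₁) ≤ f₀ (x t₁) :=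
  existence_of_global_infimum_general t₀ t₁ ht n r m φ hφ f₀ hf₀ g U hUc hUne x₀ hne K hK hgrowth
end
end

section
/- (Generalized implicit function theorem.) Let X and Y be Banach spaces, Σ a topological space, σ̂ ∈ Σ, V a neighborhood of a point x̂ ∈ X, Q a convex closed subset of X, F̂ ∈ C¹ₓ((V∩Q)×Σ, Y) with F̂(x̂,σ̂) = 0, and suppose the partial derivative F̂ₓ(x̂,σ̂): X → Y is an invertible continuous linear operator. Then there exist neighborhoods V₀′ ⊆ V₀ ⊆ V of x̂, a neighborhood U₀ of σ̂, and a neighborhood W₀ of F̂ in the norm of C¹ₓ((V∩Q)×Σ, Y) such that: for every F ∈ W₀ satisfying x − F̂ₓ(x̂,σ̂)⁻¹ F(x,σ) ∈ Q for all (x,σ) ∈ (V₀′∩Q)×U₀, there exists a continuous map g_F: U₀ → V₀∩Q with F(g_F(σ),σ) = 0 and ‖g_F(σ) − x‖_X ≤ 2‖F̂ₓ(x̂,σ̂)⁻¹‖·‖F(x,σ)‖_Y for all (x,σ) ∈ (V₀′∩Q)×U₀; moreover, if F(x,σ) = 0 with x ∈ V₀∩Q and σ ∈ U₀, then x = g_F(σ).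 -/
/-!
The zero of `F(·, σ)` is the fixed point of the simplified Newton map
`Φ_σ x = x - F̂ₓ(x̂,σ̂)⁻¹ F(x,σ)` on `D = closedBall x̂ r ∩ Q`. Near `(x̂,σ̂)`, and for `F` close to
`F̂` in `C¹ₓ`, the derivative `1 - F̂ₓ(x̂,σ̂)⁻¹ Fₓ(x,σ)` of `Φ_σ` has norm at most `1/2`, so by the
mean value inequality on the convex set `D` the map `Φ_σ` is a `1/2`-contraction. It moves `x̂` by
at most `r/2`, hence keeps the ball, and the tangency condition keeps it in `Q`; so `Φ_σ` has a
unique fixed point `g(σ)` in the complete set `D`. Banach's a posteriori estimate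
`‖x - g(σ)‖ ≤ 2 ‖x - Φ_σ x‖` gives the error bound and, applied at `x = g(σ₀)`, the continuity
of `g`.
-/

open Set Filter Topology Metric
open scoped NNReal

theorem exists_fixedPoint_dist_le_of_lipschitzOnWith {E : Type*} [MetricSpace E] {D : Set E}
    (hD : IsComplete D) (hne : D.Nonempty) {f : E → E} {k : ℝ≥0} (hk : k < 1)
    (hf : LipschitzOnWith k f D) (hfD : MapsTo f D D) :
    ∃ x ∈ D, f x = x ∧ ∀ y ∈ D, dist y x ≤ dist y (f y) / (1 - k) := by
  have := hne.to_subtype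
  have : CompleteSpace D := hD.completeSpace_coe
  have hc : ContractingWith k (hfD.restrict f D D) := ⟨hk, hf.mapsToRestrict hfD⟩
  exact ⟨hc.fixedPoint, hc.fixedPoint.2, congrArg Subtype.val hc.fixedPoint_isFixedPt,
    fun y hy => hc.dist_fixedPoint_le ⟨y, hy⟩⟩

theorem exists_continuousOn_fixedPoint_of_lipschitzOnWith {S E : Type*} [TopologicalSpace S]
    [MetricSpace E] {D : Set E} (hD : IsComplete D) (hne : D.Nonempty) {U : Set S}
    {Φ : S → E → E} {k : ℝ≥0} (hk : k < 1) (hΦ : ∀ σ ∈ U, LipschitzOnWith k (Φ σ) D)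
    (hΦD : ∀ σ ∈ U, MapsTo (Φ σ) D D) (hΦc : ∀ x ∈ D, ContinuousOn (Φ · x) U) :
    ∃ g : S → E, ContinuousOn g U ∧ ∀ σ ∈ U, g σ ∈ D ∧ Φ σ (g σ) = g σ ∧
      ∀ y ∈ D, dist y (g σ) ≤ dist y (Φ σ y) / (1 - k) := by
  have := hne.nonempty
  choose! g hgD hgfix hgdist using fun σ (hσ : σ ∈ U) =>
    exists_fixedPoint_dist_le_of_lipschitzOnWith hD hne hk (hΦ σ hσ) (hΦD σ hσ)
  refine ⟨g, fun σ₀ hσ₀ => ?_, fun σ hσ => ⟨hgD σ hσ, hgfix σ hσ, hgdist σ hσ⟩⟩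
  have hlim : Tendsto (fun σ => dist (g σ₀) (Φ σ (g σ₀)) / (1 - k)) (𝓝[U] σ₀) (𝓝 0) := by
    simpa [hgfix σ₀ hσ₀] using
      ((tendsto_const_nhds (x := g σ₀)).dist (hΦc _ (hgD σ₀ hσ₀) σ₀ hσ₀)).div_const (1 - (k : ℝ))
  refine tendsto_iff_dist_tendsto_zero.2 (squeeze_zero' (.of_forall fun _ => dist_nonneg) ?_ hlim)
  filter_upwards [self_mem_nhdsWithin] with σ hσ
  simpa only [dist_comm] using hgdist σ hσ (g σ₀) (hgD σ₀ hσ₀)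

theorem LipschitzOnWith.dist_le_of_dist_le {E : Type*} [PseudoMetricSpace E] {f : E → E}
    {k : ℝ≥0} {s : Set E} (hf : LipschitzOnWith k f s) {c x : E} (hc : c ∈ s) (hx : x ∈ s)
    {r : ℝ} (hxc : dist x c ≤ r) (hfc : dist (f c) c ≤ (1 - k) * r) : dist (f x) c ≤ r := by
  calc dist (f x) c ≤ dist (f x) (f c) + dist (f c) c := dist_triangle _ _ _
    _ ≤ k * dist x c + (1 - k) * r := add_le_add (hf.dist_le_mul x hx c hc) hfc
    _ ≤ k * r + (1 - k) * r := by gcongr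
    _ = r := by ring

theorem Convex.lipschitzOnWith_sub_comp {𝕜 X Y : Type*} [NontriviallyNormedField 𝕜]
    [IsRCLikeNormedField 𝕜] [NormedAddCommGroup X] [NormedSpace ℝ X] [NormedSpace 𝕜 X]
    [NormedAddCommGroup Y] [NormedSpace 𝕜 Y] {D : Set X} (hD : Convex ℝ D) {F : X → Y}
    {F' : X → X →L[𝕜] Y} (hF : ∀ z ∈ D, HasFDerivAt F (F' z) z) (T : Y →L[𝕜] X) {k : ℝ≥0}
    (hk : ∀ z ∈ D, ‖ContinuousLinearMap.id 𝕜 X - T.comp (F' z)‖ ≤ k) :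
    LipschitzOnWith k (fun x => x - T (F x)) D :=
  hD.lipschitzOnWith_of_nnnorm_hasFDerivWithin_le
    (fun z hz => ((hasFDerivAt_id z).sub (T.hasFDerivAt.comp z (hF z hz))).hasFDerivWithinAt)
    (fun z hz => NNReal.coe_le_coe.1 (hk z hz))

theorem ContinuousLinearEquiv.norm_id_sub_symm_comp_le {𝕜 X Y : Type*} [NontriviallyNormedField 𝕜]
    [NormedAddCommGroup X] [NormedSpace 𝕜 X] [NormedAddCommGroup Y] [NormedSpace 𝕜 Y]
    (e : X ≃L[𝕜] Y) (L : X →L[𝕜] Y) :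
    ‖ContinuousLinearMap.id 𝕜 X - (e.symm : Y →L[𝕜] X).comp L‖ ≤
      ‖(e.symm : Y →L[𝕜] X)‖ * ‖(e : X →L[𝕜] Y) - L‖ := by
  rw [← e.coe_symm_comp_coe, ← ContinuousLinearMap.comp_sub]
  exact ContinuousLinearMap.opNorm_comp_le _ _

theorem exists_closedBall_prod_subset {X S : Type*} [PseudoMetricSpace X] [TopologicalSpace S]
    {x : X} {s : S} {N : Set (X × S)} (hN : N ∈ 𝓝 (x, s)) :
    ∃ r > 0, ∃ B ∈ 𝓝 s, closedBall x r ×ˢ B ⊆ N := by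
  obtain ⟨A, hA, B, hB, hAB⟩ := mem_nhds_prod_iff.1 hN
  obtain ⟨r, hr, hrA⟩ := nhds_basis_closedBall.mem_iff.1 hA
  exact ⟨r, hr, B, hB, (prod_mono hrA subset_rfl).trans hAB⟩

theorem exists_nhds_newton_bounds {X Y S : Type*} [NormedAddCommGroup X] [NormedSpace ℝ X]
    [NormedAddCommGroup Y] [NormedSpace ℝ Y] [TopologicalSpace S] {sh : S} {xh : X} {V Q : Set X}
    (hV : V ∈ 𝓝 xh) (hxhQ : xh ∈ Q) {Fh : X → S → Y} {Fhx : X → S → X →L[ℝ] Y}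
    (hFhc : ContinuousAt (Fh xh) sh) (hFhxc : ContinuousAt (fun p : X × S => Fhx p.1 p.2) (xh, sh))
    (hFh0 : Fh xh sh = 0) (e : X ≃L[ℝ] Y) (he : (e : X →L[ℝ] Y) = Fhx xh sh) :
    ∃ r > 0, closedBall xh r ⊆ V ∧ ∃ U₀ ∈ 𝓝 sh, ∃ δ > 0,
      ∀ (F : X → S → Y) (Fx : X → S → X →L[ℝ] Y) (a b : ℝ),
        (∀ x ∈ V ∩ Q, ∀ σ, ‖F x σ - Fh x σ‖ ≤ a) → (∀ x ∈ V ∩ Q, ∀ σ, ‖Fx x σ - Fhx x σ‖ ≤ b) →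
        a + b < δ →
        (∀ x ∈ closedBall xh r ∩ Q, ∀ σ ∈ U₀,
          ‖ContinuousLinearMap.id ℝ X - (e.symm : Y →L[ℝ] X).comp (Fx x σ)‖ ≤ 2⁻¹) ∧
        ∀ σ ∈ U₀, ‖e.symm (F xh σ)‖ ≤ r / 2 := by
  set T : Y →L[ℝ] X := (e.symm : Y →L[ℝ] X)
  -- `δ = ε * min r 1` forces `b < ε` and `a < ε * r`; with `‖T‖ * ε ≤ 1/4` this gives both bounds.
  obtain ⟨ε, hε, hTε⟩ : ∃ ε > 0, ‖T‖ * ε ≤ 4⁻¹ :=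
    ⟨(4 * (‖T‖ + 1))⁻¹, by positivity, by
      rw [← div_eq_mul_inv, div_le_iff₀ (by positivity)]; nlinarith [norm_nonneg T]⟩
  obtain ⟨r, hr, B, hB, hrB⟩ := exists_closedBall_prod_subset (N := {p : X × S |
      ‖Fhx p.1 p.2 - e‖ < ε} ∩ V ×ˢ univ) (inter_mem ((hFhxc.sub continuousAt_const).norm
        |>.preimage_mem_nhds (Iio_mem_nhds (by simpa [he] using hε)))
      (prod_mem_nhds hV univ_mem))
  have hU₀ : {σ | ‖Fh xh σ‖ < ε * r} ∈ 𝓝 sh :=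
    hFhc.norm.preimage_mem_nhds (Iio_mem_nhds (by simpa [hFh0] using mul_pos hε hr))
  refine ⟨r, hr, fun x hx => (hrB (mk_mem_prod hx (mem_of_mem_nhds hB))).2.1, _,
    inter_mem hB hU₀, ε * min r 1, by positivity, fun F Fx a b ha hb hab => ?_⟩
  have hxh : xh ∈ V ∩ Q := ⟨mem_of_mem_nhds hV, hxhQ⟩
  have ha₀ : 0 ≤ a := (norm_nonneg _).trans (ha xh hxh sh)
  have hb₀ : 0 ≤ b := (norm_nonneg _).trans (hb xh hxh sh)
  have hεr : ε * min r 1 ≤ ε * r := mul_le_mul_of_nonneg_left (min_le_left r 1) hε.le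
  have hε1 : ε * min r 1 ≤ ε * 1 := mul_le_mul_of_nonneg_left (min_le_right r 1) hε.le
  refine ⟨?_, ?_⟩
  · rintro z ⟨hzr, hzQ⟩ σ ⟨hσB, -⟩
    obtain ⟨hz, hzV, -⟩ := hrB (mk_mem_prod hzr hσB)
    have hFx : ‖(e : X →L[ℝ] Y) - Fx z σ‖ ≤ ε + b := by
      refine (norm_sub_le_norm_sub_add_norm_sub _ (Fhx z σ) _).trans (add_le_add ?_ ?_)
      · exact (norm_sub_rev _ _).trans_le hz.le
      · exact (norm_sub_rev _ _).trans_le (hb z ⟨hzV, hzQ⟩ σ)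
    calc _ ≤ ‖T‖ * ‖(e : X →L[ℝ] Y) - Fx z σ‖ := e.norm_id_sub_symm_comp_le _
      _ ≤ ‖T‖ * (ε + ε) := by gcongr; linarith
      _ ≤ 2⁻¹ := by linarith
  · rintro σ ⟨-, hσ : ‖Fh xh σ‖ < ε * r⟩
    have hF : ‖F xh σ‖ ≤ ε * r + a := by
      linarith [norm_le_norm_add_norm_sub' (F xh σ) (Fh xh σ), ha xh hxh σ, hσ.le]
    calc ‖e.symm (F xh σ)‖ ≤ ‖T‖ * ‖F xh σ‖ := T.le_opNorm _
      _ ≤ ‖T‖ * (ε * r + ε * r) := by gcongr; linarith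
      _ ≤ r / 2 := by nlinarith

theorem exists_continuousOn_implicit_of_newton_bounds
    {X Y S : Type*} [NormedAddCommGroup X] [NormedSpace ℝ X] [CompleteSpace X]
    [NormedAddCommGroup Y] [NormedSpace ℝ Y] [TopologicalSpace S]
    {Q : Set X} (hQconv : Convex ℝ Q) (hQcl : IsClosed Q) {xh : X} (hxhQ : xh ∈ Q) {r : ℝ}
    (hr : 0 ≤ r) {U : Set S} (e : X ≃L[ℝ] Y) {F : X → S → Y} {Fx : X → S → X →L[ℝ] Y}
    (hFc : ∀ x, Continuous (F x))
    (hFd : ∀ x ∈ closedBall xh r ∩ Q, ∀ σ ∈ U, HasFDerivAt (F · σ) (Fx x σ) x)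
    (hFx : ∀ x ∈ closedBall xh r ∩ Q, ∀ σ ∈ U,
      ‖ContinuousLinearMap.id ℝ X - (e.symm : Y →L[ℝ] X).comp (Fx x σ)‖ ≤ 2⁻¹)
    (hF₀ : ∀ σ ∈ U, ‖e.symm (F xh σ)‖ ≤ r / 2)
    (htang : ∀ x ∈ closedBall xh r ∩ Q, ∀ σ ∈ U, x - e.symm (F x σ) ∈ Q) :
    ∃ g : S → X, ContinuousOn g U ∧ ∀ σ ∈ U, g σ ∈ closedBall xh r ∩ Q ∧ F (g σ) σ = 0 ∧
      ∀ x ∈ closedBall xh r ∩ Q, ‖g σ - x‖ ≤ 2 * ‖e.symm (F x σ)‖ := by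
  set D := closedBall xh r ∩ Q
  have hxhD : xh ∈ D := ⟨mem_closedBall_self hr, hxhQ⟩
  have hlip : ∀ σ ∈ U, LipschitzOnWith 2⁻¹ (fun x => x - e.symm (F x σ)) D := fun σ hσ =>
    ((convex_closedBall xh r).inter hQconv).lipschitzOnWith_sub_comp (hFd · · σ hσ)
      (e.symm : Y →L[ℝ] X) (fun z hz => by simpa using hFx z hz σ hσ)
  have hmaps : ∀ σ ∈ U, MapsTo (fun x => x - e.symm (F x σ)) D D := fun σ hσ x hx =>
    ⟨(hlip σ hσ).dist_le_of_dist_le hxhD hx hx.1 (by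
      simpa [dist_eq_norm, ← sub_eq_add_neg] using (hF₀ σ hσ).trans_eq (by ring)),
      htang x hx σ hσ⟩
  obtain ⟨g, hgc, hg⟩ := exists_continuousOn_fixedPoint_of_lipschitzOnWith
    (isClosed_closedBall.inter hQcl).isComplete ⟨xh, hxhD⟩ (by norm_num) hlip hmaps
    (fun x _ => (continuous_const.sub (e.symm.continuous.comp (hFc x))).continuousOn)
  refine ⟨g, hgc, fun σ hσ => ⟨(hg σ hσ).1, ?_, fun x hx => ?_⟩⟩
  · simpa using (hg σ hσ).2.1
  · simpa [dist_eq_norm, norm_sub_rev x, div_eq_mul_inv, mul_comm,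
      show (1 - 2⁻¹ : ℝ)⁻¹ = 2 by norm_num] using (hg σ hσ).2.2 x hx

theorem generalized_implicit_function_theorem_general
    {X Y : Type*} [NormedAddCommGroup X] [NormedSpace ℝ X] [CompleteSpace X]
    [NormedAddCommGroup Y] [NormedSpace ℝ Y]
    {S : Type*} [TopologicalSpace S] (sh : S)
    (xh : X) (V : Set X) (hV : V ∈ 𝓝 xh)
    (Q : Set X) (hQconv : Convex ℝ Q) (hQcl : IsClosed Q) (hxhQ : xh ∈ Q)
    (Fh : X → S → Y) (Fhx : X → S → (X →L[ℝ] Y))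
    (hFhc : Continuous fun p : X × S => Fh p.1 p.2)
    (hFhxc : Continuous fun p : X × S => Fhx p.1 p.2)
    (hFh0 : Fh xh sh = 0)
    (e : X ≃L[ℝ] Y) (he : (e : X →L[ℝ] Y) = Fhx xh sh) :
    ∃ (V₀' V₀ : Set X) (U₀ : Set S) (δ : ℝ),
      V₀' ⊆ V₀ ∧ V₀ ⊆ V ∧ V₀' ∈ 𝓝 xh ∧ V₀ ∈ 𝓝 xh ∧ U₀ ∈ 𝓝 sh ∧ 0 < δ ∧
      ∀ (F : X → S → Y) (Fx : X → S → (X →L[ℝ] Y)),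
        Continuous (fun p : X × S => F p.1 p.2) →
        (∀ x σ, HasFDerivAt (fun y => F y σ) (Fx x σ) x) →
        Continuous (fun p : X × S => Fx p.1 p.2) →
        -- `F ∈ W₀`, a `C¹ₓ`-ball around `F̂` of radius `δ`
        (∃ a b : ℝ, (∀ x ∈ V ∩ Q, ∀ σ : S, ‖F x σ - Fh x σ‖ ≤ a) ∧
          (∀ x ∈ V ∩ Q, ∀ σ : S, ‖Fx x σ - Fhx x σ‖ ≤ b) ∧ a + b < δ) →
        -- tangency condition `x − F̂ₓ(x̂,σ̂)⁻¹ F(x,σ) ∈ Q`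
        (∀ x ∈ V₀' ∩ Q, ∀ σ ∈ U₀, x - e.symm (F x σ) ∈ Q) →
        ∃ g : S → X, ContinuousOn g U₀ ∧ (∀ σ ∈ U₀, g σ ∈ V₀ ∩ Q) ∧
          (∀ σ ∈ U₀, F (g σ) σ = 0) ∧
          (∀ x ∈ V₀' ∩ Q, ∀ σ ∈ U₀,
            ‖g σ - x‖ ≤ 2 * ‖(e.symm : Y →L[ℝ] X)‖ * ‖F x σ‖) ∧
          (∀ x ∈ V₀ ∩ Q, ∀ σ ∈ U₀, F x σ = 0 → x = g σ) := by
  obtain ⟨r, hr, hrV, U₀, hU₀, δ, hδ, hbounds⟩ := exists_nhds_newton_bounds hV hxhQ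
    (hFhc.comp (.prodMk_right xh)).continuousAt hFhxc.continuousAt hFh0 e he
  refine ⟨closedBall xh r, closedBall xh r, U₀, δ, subset_rfl, hrV, closedBall_mem_nhds xh hr,
    closedBall_mem_nhds xh hr, hU₀, hδ, ?_⟩
  rintro F Fx hFc hFd - ⟨a, b, ha, hb, hab⟩ htang
  obtain ⟨hFx, hF₀⟩ := hbounds F Fx a b ha hb hab
  obtain ⟨g, hgc, hg⟩ := exists_continuousOn_implicit_of_newton_bounds hQconv hQcl hxhQ hr.le e
    (fun x => hFc.comp (.prodMk_right x)) (fun x _ σ _ => hFd x σ) hFx hF₀ htang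
  refine ⟨g, hgc, fun σ hσ => (hg σ hσ).1, fun σ hσ => (hg σ hσ).2.1, fun x hx σ hσ => ?_,
    fun x hx σ hσ hx₀ => ?_⟩
  · calc ‖g σ - x‖ ≤ 2 * ‖e.symm (F x σ)‖ := (hg σ hσ).2.2 x hx
      _ ≤ 2 * (‖(e.symm : Y →L[ℝ] X)‖ * ‖F x σ‖) := by
        gcongr; exact e.symm.toContinuousLinearMap.le_opNorm _
      _ = _ := by ring
  · simpa [hx₀, sub_eq_zero, eq_comm] using (hg σ hσ).2.2 x hx

/-- **Generalized implicit function theorem.**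
`F̂ : X × Σ → Y` belongs to `C¹ₓ((V∩Q)×Σ, Y)`: it is continuous, has a continuous
partial derivative `F̂ₓ` in `x`, and the norm
`sup ‖F̂(x,σ)‖ + sup ‖F̂ₓ(x,σ)‖` over `(V∩Q)×Σ` is finite.  A neighborhood of `F̂`
in this norm is given by a radius `δ`: `F ∈ W₀` iff
`sup ‖F−F̂‖ + sup ‖Fₓ−F̂ₓ‖ < δ` over `(V∩Q)×Σ`. -/
theorem generalized_implicit_function_theorem
    {X Y : Type*} [NormedAddCommGroup X] [NormedSpace ℝ X] [CompleteSpace X]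
    [NormedAddCommGroup Y] [NormedSpace ℝ Y] [CompleteSpace Y]
    {S : Type*} [TopologicalSpace S] (sh : S)
    (xh : X) (V : Set X) (hV : V ∈ 𝓝 xh)
    (Q : Set X) (hQconv : Convex ℝ Q) (hQcl : IsClosed Q) (hxhQ : xh ∈ Q)
    (Fh : X → S → Y) (Fhx : X → S → (X →L[ℝ] Y))
    (hFhc : Continuous fun p : X × S => Fh p.1 p.2)
    (hFhd : ∀ x σ, HasFDerivAt (fun y => Fh y σ) (Fhx x σ) x)
    (hFhxc : Continuous fun p : X × S => Fhx p.1 p.2)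
    (hFhbdd : ∃ C : ℝ, ∀ x ∈ V ∩ Q, ∀ σ : S, ‖Fh x σ‖ + ‖Fhx x σ‖ ≤ C)
    (hFh0 : Fh xh sh = 0)
    (e : X ≃L[ℝ] Y) (he : (e : X →L[ℝ] Y) = Fhx xh sh) :
    ∃ (V₀' V₀ : Set X) (U₀ : Set S) (δ : ℝ),
      V₀' ⊆ V₀ ∧ V₀ ⊆ V ∧ V₀' ∈ 𝓝 xh ∧ V₀ ∈ 𝓝 xh ∧ U₀ ∈ 𝓝 sh ∧ 0 < δ ∧
      ∀ (F : X → S → Y) (Fx : X → S → (X →L[ℝ] Y)),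
        Continuous (fun p : X × S => F p.1 p.2) →
        (∀ x σ, HasFDerivAt (fun y => F y σ) (Fx x σ) x) →
        Continuous (fun p : X × S => Fx p.1 p.2) →
        -- `F ∈ W₀`, a `C¹ₓ`-ball around `F̂` of radius `δ`
        (∃ a b : ℝ, (∀ x ∈ V ∩ Q, ∀ σ : S, ‖F x σ - Fh x σ‖ ≤ a) ∧
          (∀ x ∈ V ∩ Q, ∀ σ : S, ‖Fx x σ - Fhx x σ‖ ≤ b) ∧ a + b < δ) →
        -- tangency condition `x − F̂ₓ(x̂,σ̂)⁻¹ F(x,σ) ∈ Q`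
        (∀ x ∈ V₀' ∩ Q, ∀ σ ∈ U₀, x - e.symm (F x σ) ∈ Q) →
        ∃ g : S → X, ContinuousOn g U₀ ∧ (∀ σ ∈ U₀, g σ ∈ V₀ ∩ Q) ∧
          (∀ σ ∈ U₀, F (g σ) σ = 0) ∧
          (∀ x ∈ V₀' ∩ Q, ∀ σ ∈ U₀,
            ‖g σ - x‖ ≤ 2 * ‖(e.symm : Y →L[ℝ] X)‖ * ‖F x σ‖) ∧
          (∀ x ∈ V₀ ∩ Q, ∀ σ ∈ U₀, F x σ = 0 → x = g σ) :=
  generalized_implicit_function_theorem_general sh xh V hV Q hQconv hQcl hxhQ Fh Fhx hFhc hFhxc hFh0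
    e he
end

section
/- Let X and Y be Banach spaces, Λ: X → Y a continuous linear operator, C a convex closed subset of X, x₀ ∈ C, y₀ = Λx₀, and suppose y₀ ∈ int ΛC. Then there exist neighborhoods V₁ of x₀, U₁ of y₀, U₂ of 0 ∈ X, a constant a > 0, and a continuous map R: V₁ × U₁ × U₂ → X such that for every σ = (σ₁,σ₂) ∈ U₁ × U₂ and every ξ ∈ V₁: Λ R(ξ,σ) = σ₁, R(ξ,σ) ∈ σ₂ + C, and ‖R(ξ,σ) − ξ‖_X ≤ a(‖Λξ − σ₁‖_Y + dist(ξ − σ₂, C)), where dist(ξ − σ₂, C) is the distance from ξ − σ₂ to the set C. -/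
/-!
By Baire's theorem and convexity, `Λ x₀` is interior to the closure of `Λ (C ∩ closedBall x₀ m)`
for some `m`, and a partition of unity turns this into a continuous `g` with values in
`C ∩ closedBall x₀ m` such that `Λ (g y)` is close to `y` for all `y` near `Λ x₀`.
Moving `c ∈ C` towards a value of `g` shrinks the residual `τ - Λ c` by a fixed factor while
moving `c` by a multiple of the residual, so the iterates converge, uniformly in `(c, τ)`, to a
continuous exact solution `F (c, τ) ∈ C` of `Λ x = τ` with `‖F (c, τ) - c‖ ≤ b * ‖τ - Λ c‖`.
Finally `R ξ σ₁ σ₂ = σ₂ + F (P (ξ - σ₂), σ₁ - Λ σ₂)`, where `P` is a continuous map into `C`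
with `dist η (P η) ≤ 2 * infDist η C`, again obtained from a partition of unity.
-/

open Set Filter Topology Metric

theorem IsOpen.exists_nonempty_interior_of_subset_iUnion {Z : Type*} [TopologicalSpace Z]
    [BaireSpace Z] {U : Set Z} (hU : IsOpen U) (hne : U.Nonempty) {f : ℕ → Set Z}
    (hf : ∀ n, IsClosed (f n)) (hcov : U ⊆ ⋃ n, f n) : ∃ n, (interior (f n)).Nonempty := by
  have := hU.baireSpace
  have := hne.to_subtype
  obtain ⟨n, y, hy⟩ := nonempty_interior_of_iUnion_of_closed
    (f := fun n => ((↑) : U → Z) ⁻¹' f n) (fun n => (hf n).preimage continuous_subtype_val)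
    (eq_univ_of_forall fun y => by simpa using hcov y.2)
  exact ⟨n, y, interior_mono (image_preimage_subset _ _)
    (hU.isOpenMap_subtype_val.image_interior_subset _ ⟨y, hy, rfl⟩)⟩

theorem continuous_smul_of_continuousAt_of_ne_zero {Z E : Type*} [TopologicalSpace Z]
    [SeminormedAddCommGroup E] [NormedSpace ℝ E] {f : Z → ℝ} {u : Z → E} {B : ℝ}
    (hf : Continuous f) (hu : ∀ z, f z ≠ 0 → ContinuousAt u z) (hB : ∀ z, ‖u z‖ ≤ B) :
    Continuous fun z => f z • u z := by
  refine continuous_iff_continuousAt.2 fun z => ?_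
  by_cases hz : f z = 0
  · rw [ContinuousAt, hz, zero_smul]
    have hf0 : Tendsto f (𝓝 z) (𝓝 0) := hz ▸ hf.tendsto z
    exact hf0.zero_smul_isBoundedUnder_le (isBoundedUnder_of ⟨B, fun z => hB z⟩)
  · exact hf.continuousAt.smul (hu z hz)

theorem exists_continuousOn_tendsto_iterate {Z : Type*} [MetricSpace Z] [CompleteSpace Z]
    {T : Z → Z} {G : Set Z} {φ : Z → ℝ} {q b B : ℝ} (hT : Continuous T) (hTG : MapsTo T G G)
    (hq₀ : 0 ≤ q) (hq₁ : q < 1) (hb : 0 ≤ b) (hφ₀ : ∀ z ∈ G, 0 ≤ φ z) (hφB : ∀ z ∈ G, φ z ≤ B)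
    (hφT : ∀ z ∈ G, φ (T z) ≤ q * φ z) (hdist : ∀ z ∈ G, dist z (T z) ≤ b * φ z) :
    ∃ F : Z → Z, ContinuousOn F G ∧ ∀ z ∈ G, Tendsto (fun n => T^[n] z) atTop (𝓝 (F z)) ∧
      Tendsto (fun n => φ (T^[n] z)) atTop (𝓝 0) ∧ dist z (F z) ≤ b * φ z / (1 - q) := by
  have hφ_iter : ∀ z ∈ G, ∀ n, φ (T^[n] z) ≤ q ^ n * φ z := fun z hz n => by
    induction n with
    | zero => simp
    | succ n ih =>
      rw [Function.iterate_succ_apply', pow_succ]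
      calc φ (T (T^[n] z)) ≤ q * φ (T^[n] z) := hφT _ (hTG.iterate n hz)
        _ ≤ q * (q ^ n * φ z) := by gcongr
        _ = q ^ n * q * φ z := by ring
  have hstep : ∀ z ∈ G, ∀ n, dist (T^[n] z) (T^[n + 1] z) ≤ b * φ z * q ^ n := fun z hz n => by
    rw [Function.iterate_succ_apply']
    calc dist (T^[n] z) (T (T^[n] z)) ≤ b * φ (T^[n] z) := hdist _ (hTG.iterate n hz)
      _ ≤ b * (q ^ n * φ z) := by gcongr; exact hφ_iter z hz n
      _ = b * φ z * q ^ n := by ring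
  have hlim : ∀ z, ∃ L, z ∈ G → Tendsto (fun n => T^[n] z) atTop (𝓝 L) := fun z => by
    by_cases hz : z ∈ G
    · obtain ⟨L, hL⟩ := cauchySeq_tendsto_of_complete
        (cauchySeq_of_le_geometric q _ hq₁ (hstep z hz))
      exact ⟨L, fun _ => hL⟩
    · exact ⟨z, fun h => absurd h hz⟩
  choose F hF using hlim
  have hF_dist : ∀ z ∈ G, ∀ n, dist (T^[n] z) (F z) ≤ b * B * q ^ n / (1 - q) :=
    fun z hz n => (dist_le_of_le_geometric_of_tendsto q _ hq₁ (hstep z hz) (hF z hz) n).trans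
      (by gcongr; exact hφB z hz)
  refine ⟨F, ?_, fun z hz => ⟨hF z hz, ?_, ?_⟩⟩
  · refine TendstoUniformlyOn.continuousOn (F := fun n => T^[n]) ?_
      (Eventually.of_forall (f := atTop) fun n => (hT.iterate n).continuousOn).frequently
    rw [Metric.tendstoUniformlyOn_iff]
    intro ε hε
    have hbound : Tendsto (fun n : ℕ => b * B * q ^ n / (1 - q)) atTop (𝓝 0) := by
      simpa using ((tendsto_pow_atTop_nhds_zero_of_lt_one hq₀ hq₁).const_mul (b * B)).div_const
        (1 - q)
    filter_upwards [hbound.eventually (gt_mem_nhds hε)] with n hn z hz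
    rw [dist_comm]
    exact (hF_dist z hz n).trans_lt hn
  · refine squeeze_zero (fun n => hφ₀ _ (hTG.iterate n hz)) (hφ_iter z hz) ?_
    simpa using (tendsto_pow_atTop_nhds_zero_of_lt_one hq₀ hq₁).mul_const (φ z)
  · simpa using dist_le_of_le_geometric_of_tendsto₀ q _ hq₁ (hstep z hz) (hF z hz)

section Regularity

variable {X Y : Type*} [NormedAddCommGroup X] [NormedSpace ℝ X]
  [NormedAddCommGroup Y] [NormedSpace ℝ Y]

theorem exists_mem_interior_closure_image_inter_closedBall [CompleteSpace Y] (f : X →ₗ[ℝ] Y)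
    {C : Set X} (hC : Convex ℝ C) (x₀ : X) {y : Y} (hy : y ∈ interior (f '' C)) :
    ∃ n : ℕ, y ∈ interior (closure (f '' (C ∩ closedBall x₀ n))) := by
  set D : ℕ → Set Y := fun n => closure (f '' (C ∩ closedBall x₀ n))
  have hD_mono : Monotone D := fun n k hnk =>
    closure_mono (image_mono (inter_subset_inter_right _ (closedBall_subset_closedBall
      (Nat.cast_le.2 hnk))))
  have hmem_D : ∀ c ∈ C, ∃ n, f c ∈ D n := fun c hc =>
    let ⟨n, hn⟩ := exists_nat_ge (dist c x₀)
    ⟨n, subset_closure ⟨c, ⟨hc, hn⟩, rfl⟩⟩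
  obtain ⟨n, y₁, hy₁⟩ := isOpen_interior.exists_nonempty_interior_of_subset_iUnion ⟨y, hy⟩
    (fun n => isClosed_closure) fun z hz => by
      obtain ⟨c, hc, rfl⟩ := interior_subset hz
      exact mem_iUnion.2 (hmem_D c hc)
  -- `y` lies strictly between the interior point `y₁` of `D n` and a point of `f '' C`.
  have hline : ∀ᶠ t in 𝓝[>] (0 : ℝ), y + t • (y - y₁) ∈ f '' C := by
    refine nhdsWithin_le_nhds (ContinuousAt.preimage_mem_nhds (by fun_prop) ?_)
    simpa using mem_interior_iff_mem_nhds.1 hy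
  obtain ⟨t, ⟨c₂, hc₂, hc₂y⟩, ht⟩ := (hline.and self_mem_nhdsWithin).exists
  obtain ⟨k, hk⟩ := hmem_D c₂ hc₂
  refine ⟨max n k, ?_⟩
  have hconv : Convex ℝ (D (max n k)) :=
    ((hC.inter (convex_closedBall _ _)).linear_image f).closure
  have hy_eq : y = (t / (1 + t)) • y₁ + (1 / (1 + t)) • (y + t • (y - y₁)) := by
    have : (1 + t) ≠ 0 := by positivity
    match_scalars
    · field_simp
    · field_simp
      ring
  rw [hy_eq]
  refine hconv.combo_interior_self_mem_interior (interior_mono (hD_mono (le_max_left n k)) hy₁)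
    (hD_mono (le_max_right n k) (hc₂y ▸ hk)) (by positivity) (by positivity) ?_
  field_simp
  ring

theorem LinearMap.exists_continuous_approx_preimage (f : X →ₗ[ℝ] Y) {K : Set X}
    (hK : Convex ℝ K) (hne : K.Nonempty) {δ : ℝ} (hδ : 0 < δ) :
    ∃ g : C(Y, X), ∀ y, g y ∈ K ∧ (y ∈ closure (f '' K) → dist (f (g y)) y < δ) := by
  refine exists_continuous_forall_mem_convex_of_local_const
    (t := fun y => K ∩ {c | y ∈ closure (f '' K) → f c ∈ ball y δ}) (fun y => ?_) fun y => ?_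
  · by_cases hy : y ∈ closure (f '' K)
    · simp only [hy, true_implies]
      exact hK.inter ((convex_ball y δ).linear_preimage f)
    · simpa [hy] using hK
  by_cases hy : y ∈ closure (f '' K)
  · obtain ⟨_, ⟨c, hc, rfl⟩, hcy⟩ := Metric.mem_closure_iff.1 hy (δ / 2) (by positivity)
    refine ⟨c, eventually_of_mem (ball_mem_nhds y (half_pos hδ)) fun y' hy' => ⟨hc, fun _ => ?_⟩⟩
    rw [mem_ball] at hy' ⊢
    linarith [dist_triangle (f c) y y', dist_comm y (f c), dist_comm y' y]
  · obtain ⟨c, hc⟩ := hne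
    exact ⟨c, eventually_of_mem (isClosed_closure.isOpen_compl.mem_nhds hy)
      fun y' hy' => ⟨hc, fun h => absurd h hy'⟩⟩

theorem LinearMap.exists_continuous_approx_rightInverse [CompleteSpace Y] (f : X →ₗ[ℝ] Y)
    {C : Set X} (hC : Convex ℝ C) (x₀ : X) {y₀ : Y} (hy₀ : y₀ ∈ interior (f '' C)) {ε : ℝ}
    (hε : 0 < ε) : ∃ (m ρ : ℝ) (g : C(Y, X)), 0 < ρ ∧
      ∀ y, g y ∈ C ∩ closedBall x₀ m ∧ (y ∈ closedBall y₀ ρ → ‖f (g y) - y‖ < ε * ρ) := by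
  obtain ⟨m, hm⟩ := exists_mem_interior_closure_image_inter_closedBall f hC x₀ hy₀
  obtain ⟨ρ, hρ, hball⟩ := nhds_basis_closedBall.mem_iff.1 (mem_interior_iff_mem_nhds.1 hm)
  have hne : (C ∩ closedBall x₀ m).Nonempty :=
    (closure_nonempty_iff.1 ⟨y₀, hball (mem_closedBall_self hρ.le)⟩).of_image
  obtain ⟨g, hg⟩ := f.exists_continuous_approx_preimage (hC.inter (convex_closedBall _ _)) hne
    (mul_pos hε hρ)
  exact ⟨m, ρ, g, hρ, fun y => ⟨(hg y).1, fun hy => dist_eq_norm (f (g y)) y ▸ (hg y).2 (hball hy)⟩⟩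

theorem IsClosed.exists_continuous_mem_dist_le_mul_infDist {C : Set X} (hCcl : IsClosed C)
    (hC : Convex ℝ C) (hne : C.Nonempty) {k : ℝ} (hk : 1 < k) :
    ∃ P : X → X, Continuous P ∧ ∀ η, P η ∈ C ∧ dist η (P η) ≤ k * infDist η C := by
  obtain ⟨g, hg⟩ := exists_continuous_forall_mem_convex_of_local_const
    (t := fun η : ↥Cᶜ => C ∩ ball (η : X) (k * infDist (η : X) C))
    (fun η => hC.inter (convex_ball _ _))
    fun η => by
      have hpos : 0 < infDist (η : X) C := (hCcl.notMem_iff_infDist_pos hne).1 η.2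
      obtain ⟨c, hc, hηc⟩ := (infDist_lt_iff hne).1
        (lt_mul_of_one_lt_left hpos hk : infDist (η : X) C < k * infDist (η : X) C)
      refine ⟨c, (ContinuousAt.eventually_lt
        (continuous_subtype_val.dist continuous_const).continuousAt
        (continuous_const.mul ((continuous_infDist_pt C).comp continuous_subtype_val)).continuousAt
        hηc).mono fun η' hη' => ⟨hc, ?_⟩⟩
      rw [mem_ball, dist_comm]
      exact hη'
  classical
  set P : X → X := fun η => if h : η ∈ C then η else g ⟨η, h⟩
  have hP_mem : ∀ η, P η ∈ C ∧ dist η (P η) ≤ k * infDist η C := fun η => by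
    by_cases h : η ∈ C
    · simp only [P, dif_pos h, dist_self]
      exact ⟨h, by have := infDist_nonneg (x := η) (s := C); positivity⟩
    · simp only [P, dif_neg h]
      exact ⟨(hg ⟨η, h⟩).1, (dist_comm _ _).trans_le (mem_ball.1 (hg ⟨η, h⟩).2).le⟩
  refine ⟨P, continuous_iff_continuousAt.2 fun η₁ => ?_, hP_mem⟩
  by_cases h₁ : η₁ ∈ C
  · have hP₁ : P η₁ = η₁ := dif_pos h₁
    rw [ContinuousAt, hP₁, tendsto_iff_dist_tendsto_zero]
    refine squeeze_zero (fun _ => dist_nonneg) (fun η => ?_)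
      (g := fun η => (k + 1) * dist η η₁) ?_
    · calc dist (P η) η₁ ≤ dist η (P η) + dist η η₁ := dist_triangle_left _ _ _
        _ ≤ k * dist η η₁ + dist η η₁ := by
          gcongr
          exact (hP_mem η).2.trans (by gcongr; exact infDist_le_dist_of_mem h₁)
        _ = (k + 1) * dist η η₁ := by ring
    · simpa using ((tendsto_id (x := 𝓝 η₁)).dist (tendsto_const_nhds (x := η₁))).const_mul (k + 1)
  · refine (continuousOn_iff_continuous_domRestrict.2 ?_).continuousAt
      (hCcl.isOpen_compl.mem_nhds h₁)
    convert g.continuous using 1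
    funext η
    exact dif_neg η.2

/-- If `g y` approximately solves `Λ x = y`, then moving `c` towards `g w`, where `w` is the point
at distance `r` from `Λ c` in the direction of `τ`, by the fraction `‖τ - Λ c‖ / r` solves
`Λ x = τ` up to that fraction of the error of `g` at `w`, and stays in any convex set containing
`c` and the range of `g`. -/
noncomputable def corrector (Λ : X →L[ℝ] Y) (g : Y → X) (r : ℝ) (c : X) (τ : Y) : X :=
  c + (‖τ - Λ c‖ / r) • (g (Λ c + (r / ‖τ - Λ c‖) • (τ - Λ c)) - c)

section Corrector

variable (Λ : X →L[ℝ] Y) {g : Y → X} {r : ℝ} {c : X} {τ : Y}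

theorem corrector_mem {C : Set X} (hC : Convex ℝ C) (hc : c ∈ C) (hg : ∀ y, g y ∈ C)
    (hτ : ‖τ - Λ c‖ ≤ r) : corrector Λ g r c τ ∈ C :=
  hC.add_smul_sub_mem hc (hg _)
    ⟨div_nonneg (norm_nonneg _) ((norm_nonneg _).trans hτ),
      div_le_one_of_le₀ hτ ((norm_nonneg _).trans hτ)⟩

theorem norm_corrector_sub_le {B : ℝ} (hr : 0 ≤ r) (hg : ∀ y, ‖g y - c‖ ≤ B) :
    ‖corrector Λ g r c τ - c‖ ≤ ‖τ - Λ c‖ / r * B := by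
  rw [corrector, add_sub_cancel_left, norm_smul, Real.norm_of_nonneg (by positivity)]
  gcongr
  exact hg _

theorem norm_sub_map_corrector_le {δ : ℝ} (hr : 0 < r)
    (hg : ∀ y ∈ closedBall (Λ c) r, ‖Λ (g y) - y‖ ≤ δ) :
    ‖τ - Λ (corrector Λ g r c τ)‖ ≤ ‖τ - Λ c‖ / r * δ := by
  rcases (norm_nonneg (τ - Λ c)).eq_or_lt with he | he
  · simp [corrector, norm_eq_zero.1 he.symm]
  set w := Λ c + (r / ‖τ - Λ c‖) • (τ - Λ c)
  have hw : w ∈ closedBall (Λ c) r := by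
    rw [mem_closedBall, dist_eq_norm, add_sub_cancel_left, norm_smul,
      Real.norm_of_nonneg (by positivity), div_mul_cancel₀ _ he.ne']
  have key : τ - Λ (corrector Λ g r c τ) = (‖τ - Λ c‖ / r) • (w - Λ (g w)) := by
    have hcancel : ‖τ - Λ c‖ / r * (r / ‖τ - Λ c‖) = 1 := by field_simp
    simp only [corrector, map_add, map_smul, map_sub, w, smul_sub, smul_add, smul_smul, hcancel,
      one_smul]
    abel
  rw [key, norm_smul, Real.norm_of_nonneg (by positivity), norm_sub_rev w]
  gcongr
  exact hg w hw

theorem continuous_corrector (hg : Continuous g) {B : ℝ} (hgB : ∀ y, ‖g y‖ ≤ B) :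
    Continuous fun p : X × Y => corrector Λ g r p.1 p.2 := by
  set t : X × Y → ℝ := fun p => ‖p.2 - Λ p.1‖ / r
  have ht : Continuous t := by fun_prop
  have hsplit : (fun p : X × Y => corrector Λ g r p.1 p.2) = fun p =>
      p.1 + (t p • g (Λ p.1 + (r / ‖p.2 - Λ p.1‖) • (p.2 - Λ p.1)) - t p • p.1) := by
    funext p
    simp only [corrector, t, smul_sub]
  rw [hsplit]
  refine continuous_fst.add ((continuous_smul_of_continuousAt_of_ne_zero ht (fun p hp => ?_)
    fun p => hgB _).sub (ht.smul continuous_fst))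
  have hne : ‖p.2 - Λ p.1‖ ≠ 0 := fun h => hp (by simp [t, h])
  exact hg.continuousAt.comp (by fun_prop (disch := exact hne))

theorem corrector_step_estimates {C : Set X} (hC : Convex ℝ C) {x₀ : X} {y₀ : Y} {m : ℝ}
    (hr : 0 < r) (hgC : ∀ y, g y ∈ C ∩ closedBall x₀ m)
    (hg : ∀ y ∈ closedBall y₀ (2 * r), ‖Λ (g y) - y‖ ≤ r / 4)
    (hc : c ∈ C) (hcx : ‖c - x₀‖ ≤ 1) (hτ : ‖τ - y₀‖ + ‖τ - Λ c‖ ≤ r) :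
    corrector Λ g r c τ ∈ C ∧ ‖τ - Λ (corrector Λ g r c τ)‖ ≤ ‖τ - Λ c‖ / 4 ∧
      ‖corrector Λ g r c τ - c‖ ≤ (m + 1) / r * ‖τ - Λ c‖ := by
  have hτc : ‖τ - Λ c‖ ≤ r := by linarith [norm_nonneg (τ - y₀)]
  refine ⟨corrector_mem Λ hC hc (fun y => (hgC y).1) hτc, ?_, ?_⟩
  · refine (norm_sub_map_corrector_le Λ hr fun y hy => hg y ?_).trans_eq (by field_simp)
    rw [mem_closedBall] at hy ⊢
    linarith [dist_triangle y (Λ c) y₀, dist_eq_norm (Λ c) y₀, norm_sub_rev (Λ c) τ,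
      norm_sub_le_norm_sub_add_norm_sub (Λ c) τ y₀]
  · refine (norm_corrector_sub_le Λ (B := m + 1) hr.le fun y => ?_).trans_eq (by ring)
    have hy := mem_closedBall_iff_norm.1 (hgC y).2
    linarith [norm_sub_le_norm_sub_add_norm_sub (g y) x₀ c, norm_sub_rev x₀ c]

end Corrector

theorem exists_continuousOn_solution_of_approx_rightInverse [CompleteSpace X] [CompleteSpace Y]
    (Λ : X →L[ℝ] Y) {C : Set X} (hC : Convex ℝ C) (hCcl : IsClosed C) {x₀ : X} {y₀ : Y}
    {m r b : ℝ} (hr : 0 < r) (hb : 4 / 3 * ((m + 1) / r) ≤ b) {g : Y → X} (hgc : Continuous g)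
    (hgC : ∀ y, g y ∈ C ∩ closedBall x₀ m)
    (hg : ∀ y ∈ closedBall y₀ (2 * r), ‖Λ (g y) - y‖ ≤ r / 4) :
    ∃ F : X × Y → X,
      ContinuousOn F {p | p.1 ∈ C ∧ ‖p.1 - x₀‖ + b * ‖p.2 - Λ p.1‖ ≤ 1 ∧
        ‖p.2 - y₀‖ + ‖p.2 - Λ p.1‖ ≤ r} ∧
      ∀ p : X × Y, p.1 ∈ C → ‖p.1 - x₀‖ + b * ‖p.2 - Λ p.1‖ ≤ 1 →
        ‖p.2 - y₀‖ + ‖p.2 - Λ p.1‖ ≤ r →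
        F p ∈ C ∧ Λ (F p) = p.2 ∧ ‖F p - p.1‖ ≤ b * ‖p.2 - Λ p.1‖ := by
  have hm : 0 ≤ m := dist_nonneg.trans (hgC 0).2
  have hb₀ : 0 ≤ b := (by positivity : 0 ≤ 4 / 3 * ((m + 1) / r)).trans hb
  set φ : X × Y → ℝ := fun z => ‖z.2 - Λ z.1‖
  set T : X × Y → X × Y := fun z => (corrector Λ g r z.1 z.2, z.2)
  set G := {z : X × Y | z.1 ∈ C ∧ ‖z.1 - x₀‖ + b * φ z ≤ 1 ∧ ‖z.2 - y₀‖ + φ z ≤ r}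
  have hstep : ∀ z ∈ G, (T z).1 ∈ C ∧ φ (T z) ≤ φ z / 4 ∧ ‖(T z).1 - z.1‖ ≤ (m + 1) / r * φ z :=
    fun z hz => corrector_step_estimates Λ hC hr hgC hg hz.1
      ((le_add_of_nonneg_right (mul_nonneg hb₀ (norm_nonneg _))).trans hz.2.1) hz.2.2
  -- `‖c - x₀‖ + b * ‖τ - Λ c‖` does not increase: a step moves `c` by at most
  -- `3 / 4 * b * ‖τ - Λ c‖`, and the residual drops by `3 / 4 * ‖τ - Λ c‖`.
  have hTG : MapsTo T G G := fun z hz => by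
    obtain ⟨hTC, hφT, hmove⟩ := hstep z hz
    have hφ₀ : 0 ≤ φ z := norm_nonneg _
    refine ⟨hTC, ?_, by linarith [hz.2.2]⟩
    linarith [norm_sub_le_norm_sub_add_norm_sub (T z).1 z.1 x₀, mul_le_mul_of_nonneg_right hb hφ₀,
      mul_le_mul_of_nonneg_left hφT hb₀, hz.2.1]
  have hT : Continuous T := (continuous_corrector Λ hgc
    (fun y => norm_le_of_mem_closedBall (hgC y).2)).prodMk continuous_snd
  have hT_snd : ∀ z n, (T^[n] z).2 = z.2 := fun z n => by
    induction n with
    | zero => rfl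
    | succ n ih => rw [Function.iterate_succ_apply']; exact ih
  obtain ⟨F, hFcont, hF⟩ := exists_continuousOn_tendsto_iterate hT hTG
    (by norm_num : (0 : ℝ) ≤ 1 / 4) (by norm_num) (by positivity : 0 ≤ (m + 1) / r)
    (fun z _ => norm_nonneg _) (fun z hz => (le_add_of_nonneg_left (norm_nonneg _)).trans hz.2.2)
    (fun z hz => (hstep z hz).2.1.trans_eq (by ring)) fun z hz => by
      rw [Prod.dist_eq, dist_self, max_eq_left dist_nonneg, dist_comm, dist_eq_norm]
      exact (hstep z hz).2.2
  refine ⟨fun z => (F z).1, continuous_fst.comp_continuousOn hFcont, fun p hpC hp₁ hp₂ => ?_⟩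
  have hpG : p ∈ G := ⟨hpC, hp₁, hp₂⟩
  obtain ⟨hlim, hφlim, hdist⟩ := hF p hpG
  have hF_snd : (F p).2 = p.2 := tendsto_nhds_unique ((continuous_snd.tendsto _).comp hlim)
    (by simp only [Function.comp_def, hT_snd]; exact tendsto_const_nhds)
  have hφF : φ (F p) = 0 :=
    tendsto_nhds_unique (((by fun_prop : Continuous φ).tendsto _).comp hlim) hφlim
  refine ⟨hCcl.mem_of_tendsto ((continuous_fst.tendsto _).comp hlim)
    (Eventually.of_forall fun n => (hTG.iterate n hpG).1), ?_, ?_⟩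
  · rw [← hF_snd]
    exact (sub_eq_zero.1 (norm_eq_zero.1 hφF)).symm
  · calc ‖(F p).1 - p.1‖ ≤ dist p (F p) := by
          rw [dist_comm, ← dist_eq_norm, Prod.dist_eq]
          exact le_max_left _ _
      _ ≤ (m + 1) / r * φ p / (1 - 1 / 4) := hdist
      _ = 4 / 3 * ((m + 1) / r) * φ p := by ring
      _ ≤ b * φ p := mul_le_mul_of_nonneg_right hb (norm_nonneg _)

theorem exists_continuousOn_solution_of_mem_interior_image [CompleteSpace X] [CompleteSpace Y]
    (Λ : X →L[ℝ] Y) {C : Set X} (hC : Convex ℝ C) (hCcl : IsClosed C) (x₀ : X)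
    (hint : Λ x₀ ∈ interior (Λ '' C)) :
    ∃ (N : Set (X × Y)) (b : ℝ) (F : X × Y → X), N ∈ 𝓝 (x₀, Λ x₀) ∧ 0 ≤ b ∧
      ContinuousOn F (N ∩ C ×ˢ univ) ∧
      ∀ p ∈ N, p.1 ∈ C → F p ∈ C ∧ Λ (F p) = p.2 ∧ ‖F p - p.1‖ ≤ b * ‖p.2 - Λ p.1‖ := by
  obtain ⟨m, ρ, g, hρ, hg⟩ := (Λ : X →ₗ[ℝ] Y).exists_continuous_approx_rightInverse hC x₀ hint
    (by norm_num : (0 : ℝ) < 1 / 8)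
  have hm : 0 ≤ m := dist_nonneg.trans (hg 0).1.2
  set r := ρ / 2 with hr
  set b := 4 / 3 * ((m + 1) / r)
  obtain ⟨F, hFcont, hF⟩ := exists_continuousOn_solution_of_approx_rightInverse Λ hC hCcl
    (y₀ := Λ x₀) (by positivity : 0 < r) le_rfl g.continuous (fun y => (hg y).1) fun y hy => by
      refine ((hg y).2 ?_).le.trans_eq (by rw [hr]; ring)
      rwa [hr, mul_div_cancel₀ _ two_ne_zero] at hy
  set N := {p : X × Y | ‖p.1 - x₀‖ + b * ‖p.2 - Λ p.1‖ < 1 ∧ ‖p.2 - Λ x₀‖ + ‖p.2 - Λ p.1‖ < r}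
  have hN : IsOpen N := IsOpen.and (isOpen_lt (by fun_prop) continuous_const)
    (isOpen_lt (by fun_prop) continuous_const)
  refine ⟨N, b, F, hN.mem_nhds (by simp [N, hr, hρ]), by positivity,
    hFcont.mono fun p ⟨hp, hpC, _⟩ => ⟨hpC, hp.1.le, hp.2.le⟩,
    fun p hp hpC => hF p hpC hp.1.le hp.2.le⟩

theorem norm_add_sub_le_of_dist_le (Λ : X →L[ℝ] Y) {b d : ℝ} {ξ σ₂ c x : X} {σ₁ : Y}
    (hb : 0 ≤ b) (hx : ‖x - c‖ ≤ b * ‖σ₁ - Λ σ₂ - Λ c‖) (hc : dist (ξ - σ₂) c ≤ 2 * d) :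
    ‖σ₂ + x - ξ‖ ≤ (b + 2 * b * ‖Λ‖ + 2) * (‖Λ ξ - σ₁‖ + d) := by
  rw [dist_eq_norm] at hc
  have hd : 0 ≤ d := by linarith [norm_nonneg (ξ - σ₂ - c)]
  have hres : ‖σ₁ - Λ σ₂ - Λ c‖ ≤ ‖Λ ξ - σ₁‖ + ‖Λ‖ * (2 * d) := by
    have : σ₁ - Λ σ₂ - Λ c = Λ (ξ - σ₂ - c) - (Λ ξ - σ₁) := by simp only [map_sub]; abel
    rw [this]
    refine (norm_sub_le _ _).trans ?_
    rw [add_comm]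
    gcongr
    exact Λ.le_of_opNorm_le_of_le le_rfl hc
  calc ‖σ₂ + x - ξ‖ ≤ ‖x - c‖ + ‖ξ - σ₂ - c‖ := by
        rw [show σ₂ + x - ξ = (x - c) - (ξ - σ₂ - c) by abel]
        exact norm_sub_le _ _
    _ ≤ b * (‖Λ ξ - σ₁‖ + ‖Λ‖ * (2 * d)) + 2 * d := by gcongr; exact hx.trans (by gcongr)
    _ ≤ (b + 2 * b * ‖Λ‖ + 2) * (‖Λ ξ - σ₁‖ + d) := by
        nlinarith [norm_nonneg Λ, norm_nonneg (Λ ξ - σ₁), mul_nonneg hb (norm_nonneg Λ),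
          mul_nonneg (mul_nonneg hb (norm_nonneg Λ)) (norm_nonneg (Λ ξ - σ₁))]

end Regularity

/-- **Proposition (corollary of the implicit function theorem for inclusions).** -/
theorem surjection_onto_convex_with_estimate
    {X Y : Type*} [NormedAddCommGroup X] [NormedSpace ℝ X] [CompleteSpace X]
    [NormedAddCommGroup Y] [NormedSpace ℝ Y] [CompleteSpace Y]
    (Λ : X →L[ℝ] Y) (C : Set X) (hCconv : Convex ℝ C) (hCcl : IsClosed C)
    (x₀ : X) (hx₀ : x₀ ∈ C)
    (hint : Λ x₀ ∈ interior (Λ '' C)) :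
    ∃ (V₁ : Set X) (U₁ : Set Y) (U₂ : Set X) (a : ℝ) (R : X → Y → X → X),
      V₁ ∈ 𝓝 x₀ ∧ U₁ ∈ 𝓝 (Λ x₀) ∧ U₂ ∈ 𝓝 (0 : X) ∧ 0 < a ∧
      ContinuousOn (fun p : X × Y × X => R p.1 p.2.1 p.2.2) (V₁ ×ˢ U₁ ×ˢ U₂) ∧
      ∀ ξ ∈ V₁, ∀ σ₁ ∈ U₁, ∀ σ₂ ∈ U₂,
        Λ (R ξ σ₁ σ₂) = σ₁ ∧
        (∃ c ∈ C, R ξ σ₁ σ₂ = σ₂ + c) ∧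
        ‖R ξ σ₁ σ₂ - ξ‖ ≤ a * (‖Λ ξ - σ₁‖ + infDist (ξ - σ₂) C) := by
  obtain ⟨N, b, F, hN, hb, hFcont, hF⟩ :=
    exists_continuousOn_solution_of_mem_interior_image Λ hCconv hCcl x₀ hint
  obtain ⟨P, hPcont, hP⟩ :=
    hCcl.exists_continuous_mem_dist_le_mul_infDist hCconv ⟨x₀, hx₀⟩ one_lt_two
  have hPx₀ : P x₀ = x₀ := by
    simpa [infDist_zero_of_mem hx₀, eq_comm] using (hP x₀).2
  set φ : X × Y × X → X × Y := fun p => (P (p.1 - p.2.2), p.2.1 - Λ p.2.2)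
  have hφ : Continuous φ := by fun_prop
  obtain ⟨V₁, hV₁, W, hW, hVW⟩ := mem_nhds_prod_iff.1
    (hφ.continuousAt.preimage_mem_nhds (by simpa [φ, hPx₀] using hN) : φ ⁻¹' N ∈ 𝓝 (x₀, Λ x₀, 0))
  obtain ⟨U₁, hU₁, U₂, hU₂, hUW⟩ := mem_nhds_prod_iff.1 hW
  have hmaps : MapsTo φ (V₁ ×ˢ U₁ ×ˢ U₂) (N ∩ C ×ˢ univ) := fun p hp =>
    ⟨hVW (mk_mem_prod hp.1 (hUW hp.2)), (hP _).1, trivial⟩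
  refine ⟨V₁, U₁, U₂, b + 2 * b * ‖Λ‖ + 2, fun ξ σ₁ σ₂ => σ₂ + F (φ (ξ, σ₁, σ₂)), hV₁, hU₁, hU₂,
    by positivity, continuous_snd.snd.continuousOn.add (hFcont.comp hφ.continuousOn hmaps),
    fun ξ hξ σ₁ hσ₁ σ₂ hσ₂ => ?_⟩
  obtain ⟨hFC, hFΛ, hFest⟩ :=
    hF _ (hmaps (show (ξ, σ₁, σ₂) ∈ V₁ ×ˢ U₁ ×ˢ U₂ from ⟨hξ, hσ₁, hσ₂⟩)).1 (hP _).1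
  exact ⟨by simp [hFΛ, φ], ⟨_, hFC, rfl⟩, norm_add_sub_le_of_dist_le Λ hb hFest (hP _).2⟩
end

section
/- Let U ⊆ ℝ with 0 ∈ int U and let g: ℝ → ℝ be continuous with g(0) = 0. Suppose the zero pair delivers a strong minimum for the problem of minimizing ∫₀¹ x(t) g(u(t)) dt subject to ẋ = u(t), x(0) = x(1) = 0, u(t) ∈ U a.e.; that is, there exists ρ > 0 such that for every u ∈ L∞([0,1]) with u(t) ∈ U a.e. and x(t) = ∫₀ᵗ u(s) ds satisfying x(1) = 0 and sup_{t∈[0,1]} |x(t)| < ρ, one has ∫₀¹ x(t) g(u(t)) dt ≥ 0. Then g is linear on some interval centered at the origin: there exist ε > 0 and c ∈ ℝ such that g(u) = c·u for all u ∈ [−ε, ε]. -/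
open MeasureTheory Set intervalIntegral

/-!
Needle variations. For `a, b ∈ U` of opposite signs, the control equal to `a` on `[0, α)`, to `b`
on `[α, α + β)` and to `0` afterwards, with `α = |b| δ`, `β = |a| δ`, has a triangular trajectory
returning to `0`, of height `|a b| δ`, and cost `δ² (g(a) a b² - g(b) b a²) / 2`. Letting `δ` be
small, the strong minimum makes this cost nonnegative; exchanging `a` and `b` gives the reverse
inequality, so `g(a) / a = g(b) / b` whenever `a > 0 > b` are close to `0`.
-/

noncomputable def stepControl (a b α β t : ℝ) : ℝ :=
  if t < α then a else if t < α + β then b else 0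

section stepControl

variable {a b α β : ℝ}

lemma stepControl_mem (t : ℝ) : stepControl a b α β t ∈ ({a, b, 0} : Set ℝ) := by
  unfold stepControl
  split_ifs <;> simp

lemma apply_stepControl {g : ℝ → ℝ} (hg0 : g 0 = 0) (t : ℝ) :
    g (stepControl a b α β t) = stepControl (g a) (g b) α β t := by
  simp only [stepControl]
  split_ifs <;> simp [hg0]

lemma measurable_stepControl : Measurable (stepControl a b α β) :=
  Measurable.ite measurableSet_Iio measurable_const
    (Measurable.ite measurableSet_Iio measurable_const measurable_const)

lemma abs_stepControl_le (t : ℝ) : |stepControl a b α β t| ≤ max |a| |b| := by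
  unfold stepControl
  split_ifs <;> simp

lemma intervalIntegrable_stepControl (p q : ℝ) :
    IntervalIntegrable (stepControl a b α β) volume p q :=
  IntervalIntegrable.mono_fun' intervalIntegrable_const
    measurable_stepControl.aestronglyMeasurable (ae_of_all _ abs_stepControl_le)

lemma integral_stepControl_of_mem_Icc_zero {t : ℝ} (ht : t ∈ Icc 0 α) :
    ∫ s in (0:ℝ)..t, stepControl a b α β s = a * t := by
  rw [integral_congr_Ioo_of_le ht.1 (g := fun _ ↦ a), intervalIntegral.integral_const,
    smul_eq_mul, sub_zero, mul_comm]
  intro s hs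
  simp [stepControl, hs.2.trans_le ht.2]

lemma integral_stepControl_of_mem_Icc (hα : 0 ≤ α) {t : ℝ} (ht : t ∈ Icc α (α + β)) :
    ∫ s in (0:ℝ)..t, stepControl a b α β s = a * α + b * (t - α) := by
  rw [← integral_add_adjacent_intervals (intervalIntegrable_stepControl 0 α)
    (intervalIntegrable_stepControl α t), integral_stepControl_of_mem_Icc_zero ⟨hα, le_rfl⟩,
    integral_congr_Ioo_of_le ht.1 (g := fun _ ↦ b), intervalIntegral.integral_const, smul_eq_mul,
    mul_comm b]
  intro s hs
  simp [stepControl, hs.1.le, hs.2.trans_le ht.2]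

lemma integral_stepControl_of_le (hα : 0 ≤ α) (hβ : 0 ≤ β) (hsum : a * α + b * β = 0)
    {t : ℝ} (ht : α + β ≤ t) :
    ∫ s in (0:ℝ)..t, stepControl a b α β s = 0 := by
  rw [← integral_add_adjacent_intervals (intervalIntegrable_stepControl 0 (α + β))
    (intervalIntegrable_stepControl (α + β) t),
    integral_stepControl_of_mem_Icc hα ⟨le_add_of_nonneg_right hβ, le_rfl⟩,
    integral_congr_Ioo_of_le ht (g := fun _ ↦ 0)]
  · simp only [intervalIntegral.integral_zero, add_zero]
    linear_combination hsum
  intro s hs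
  simp only [stepControl, if_neg (not_lt.2 ((le_add_of_nonneg_right hβ).trans hs.1.le)),
    if_neg (not_lt.2 hs.1.le)]

lemma abs_integral_stepControl_le (hα : 0 ≤ α) (hβ : 0 ≤ β) (hsum : a * α + b * β = 0)
    {t : ℝ} (ht : 0 ≤ t) :
    |∫ s in (0:ℝ)..t, stepControl a b α β s| ≤ |a| * α := by
  rcases le_total t α with htα | htα
  · rw [integral_stepControl_of_mem_Icc_zero ⟨ht, htα⟩, abs_mul, abs_of_nonneg ht]
    exact mul_le_mul_of_nonneg_left htα (abs_nonneg a)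
  rcases le_total t (α + β) with htαβ | htαβ
  · rw [integral_stepControl_of_mem_Icc hα ⟨htα, htαβ⟩,
      show a * α + b * (t - α) = b * (t - (α + β)) by linear_combination hsum, abs_mul,
      abs_of_nonpos (sub_nonpos.2 htαβ),
      show |a| * α = |b| * β by rw [← abs_of_nonneg hα, ← abs_of_nonneg hβ, ← abs_mul,
        ← abs_mul, eq_neg_of_add_eq_zero_left hsum, abs_neg]]
    exact mul_le_mul_of_nonneg_left (by linarith) (abs_nonneg b)
  · rw [integral_stepControl_of_le hα hβ hsum htαβ, abs_zero]
    positivity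

lemma integral_primitive_mul_stepControl (hα : 0 ≤ α) (hβ : 0 ≤ β) (hαβ : α + β ≤ 1)
    (hsum : a * α + b * β = 0) (c d : ℝ) :
    ∫ t in (0:ℝ)..1, (∫ s in (0:ℝ)..t, stepControl a b α β s) * stepControl c d α β t
      = c * a * α ^ 2 / 2 - d * b * β ^ 2 / 2 := by
  have hintegrable (p q : ℝ) : IntervalIntegrable
      (fun t ↦ (∫ s in (0:ℝ)..t, stepControl a b α β s) * stepControl c d α β t) volume p q :=
    intervalIntegrable_stepControl p q |>.continuousOn_mul
      (continuous_primitive intervalIntegrable_stepControl 0).continuousOn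
  rw [← integral_add_adjacent_intervals (hintegrable 0 (α + β)) (hintegrable (α + β) 1),
    ← integral_add_adjacent_intervals (hintegrable 0 α) (hintegrable α (α + β)),
    integral_congr_Ioo_of_le hα (g := fun t ↦ c * a * t),
    integral_congr_Ioo_of_le (le_add_of_nonneg_right hβ)
      (g := fun t ↦ d * (a * α - b * α) + d * b * t),
    integral_congr_Ioo_of_le hαβ (g := fun _ ↦ 0)]
  · rw [intervalIntegral.integral_const_mul, integral_add intervalIntegrable_const
      (intervalIntegrable_id.const_mul _), intervalIntegral.integral_const,
      intervalIntegral.integral_const_mul, integral_id, integral_id, intervalIntegral.integral_zero,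
      smul_eq_mul]
    linear_combination d * β * hsum
  · intro t ht
    dsimp only
    rw [integral_stepControl_of_le hα hβ hsum ht.1.le, zero_mul]
  · intro t ht
    dsimp only
    rw [integral_stepControl_of_mem_Icc hα ⟨ht.1.le, ht.2.le⟩]
    simp only [stepControl, if_neg (not_lt.2 ht.1.le), if_pos ht.2]
    ring
  · intro t ht
    dsimp only
    rw [integral_stepControl_of_mem_Icc_zero ⟨ht.1.le, ht.2.le⟩]
    simp only [stepControl, if_pos ht.2]
    ring

end stepControl

lemma mul_abs_add_mul_abs_eq_zero {a b : ℝ} (hab : a * b < 0) : a * |b| + b * |a| = 0 := by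
  rcases mul_neg_iff.1 hab with ⟨ha, hb⟩ | ⟨ha, hb⟩
  · rw [abs_of_pos ha, abs_of_neg hb]; ring
  · rw [abs_of_neg ha, abs_of_pos hb]; ring

lemma eq_div_mul_of_mul_eq_mul {g : ℝ → ℝ} {ε : ℝ} (hε : 0 < ε) (hg0 : g 0 = 0)
    (h : ∀ p ∈ Icc (-ε) ε, ∀ q ∈ Icc (-ε) ε, p * q < 0 → q * g p = p * g q) :
    ∀ v ∈ Icc (-ε) ε, g v = g ε / ε * v := by
  have hε_mem : ε ∈ Icc (-ε) ε := ⟨by linarith, le_rfl⟩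
  have hnε_mem : -ε ∈ Icc (-ε) ε := ⟨le_rfl, by linarith⟩
  have hodd : g (-ε) = -g ε := by
    have := h ε hε_mem (-ε) hnε_mem (by nlinarith)
    nlinarith
  intro v hv
  rw [div_mul_eq_mul_div, eq_div_iff hε.ne']
  rcases lt_trichotomy v 0 with hv0 | rfl | hv0
  · linear_combination -h ε hε_mem v hv (by nlinarith)
  · simp [hg0]
  · linear_combination -h v hv (-ε) hnε_mem (by nlinarith) - v * hodd

def IsStrongMinOfZero (U : Set ℝ) (g : ℝ → ℝ) (ρ : ℝ) : Prop :=
  ∀ u : ℝ → ℝ, Measurable u →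
    (∃ C : ℝ, ∀ᵐ t ∂(volume.restrict (Icc (0:ℝ) 1)), |u t| ≤ C) →
    (∀ᵐ t ∂(volume.restrict (Icc (0:ℝ) 1)), u t ∈ U) →
    (∫ s in (0:ℝ)..1, u s) = 0 →
    (∀ t ∈ Icc (0:ℝ) 1, |∫ s in (0:ℝ)..t, u s| < ρ) →
    0 ≤ ∫ t in (0:ℝ)..1, (∫ s in (0:ℝ)..t, u s) * g (u t)

namespace IsStrongMinOfZero

variable {U : Set ℝ} {g : ℝ → ℝ} {ρ : ℝ}

lemma needle_nonneg (hmin : IsStrongMinOfZero U g ρ) (hρ : 0 < ρ) (h0 : 0 ∈ U)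
    (hg0 : g 0 = 0) {a b : ℝ} (ha : a ∈ U) (hb : b ∈ U) (hab : a * b < 0) :
    0 ≤ g a * a * b ^ 2 - g b * b * a ^ 2 := by
  obtain ⟨δ, hδ, hδ_small⟩ := exists_pos_mul_lt (lt_min one_pos hρ) (|a| + |b| + |a| * |b|)
  have hα : 0 ≤ |b| * δ := by positivity
  have hβ : 0 ≤ |a| * δ := by positivity
  have hsum : a * (|b| * δ) + b * (|a| * δ) = 0 := by
    linear_combination δ * mul_abs_add_mul_abs_eq_zero hab
  have hαβ : |b| * δ + |a| * δ ≤ 1 := by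
    nlinarith [min_le_left 1 ρ, mul_nonneg (mul_nonneg (abs_nonneg a) (abs_nonneg b)) hδ.le]
  have hheight : |a| * (|b| * δ) < ρ := by
    nlinarith [min_le_right 1 ρ, mul_nonneg (add_nonneg (abs_nonneg a) (abs_nonneg b)) hδ.le]
  have hcost := hmin (stepControl a b (|b| * δ) (|a| * δ)) measurable_stepControl
    ⟨_, ae_of_all _ abs_stepControl_le⟩
    (ae_of_all _ fun t ↦ by rcases stepControl_mem t with h | h | h <;> rw [h] <;> assumption)
    (integral_stepControl_of_le hα hβ hsum hαβ)
    (fun t ht ↦ (abs_integral_stepControl_le hα hβ hsum ht.1).trans_lt hheight)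
  simp only [apply_stepControl hg0] at hcost
  rw [integral_primitive_mul_stepControl hα hβ hαβ hsum,
    show g a * a * (|b| * δ) ^ 2 / 2 - g b * b * (|a| * δ) ^ 2 / 2
      = δ ^ 2 / 2 * (g a * a * b ^ 2 - g b * b * a ^ 2) by simp only [mul_pow, sq_abs]; ring]
    at hcost
  exact nonneg_of_mul_nonneg_right hcost (by positivity)

lemma mul_apply_eq_mul_apply (hmin : IsStrongMinOfZero U g ρ) (hρ : 0 < ρ) (h0 : 0 ∈ U)
    (hg0 : g 0 = 0) {a b : ℝ} (ha : a ∈ U) (hb : b ∈ U) (hab : a * b < 0) :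
    b * g a = a * g b := by
  have h₁ := hmin.needle_nonneg hρ h0 hg0 ha hb hab
  have h₂ := hmin.needle_nonneg hρ h0 hg0 hb ha (by linarith [mul_comm a b])
  have hprod : (a * b) * (b * g a - a * g b) = 0 := by
    linear_combination (le_antisymm (by linarith) h₁ : g a * a * b ^ 2 - g b * b * a ^ 2 = 0)
  linear_combination (mul_eq_zero.1 hprod).resolve_left hab.ne

end IsStrongMinOfZero

theorem example_two_general
    (U : Set ℝ) (hU : (0 : ℝ) ∈ interior U)
    (g : ℝ → ℝ) (hg0 : g 0 = 0)
    (hmin : ∃ ρ > (0:ℝ), ∀ u : ℝ → ℝ, Measurable u →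
      (∃ C : ℝ, ∀ᵐ t ∂(volume.restrict (Icc (0:ℝ) 1)), |u t| ≤ C) →
      (∀ᵐ t ∂(volume.restrict (Icc (0:ℝ) 1)), u t ∈ U) →
      (∫ s in (0:ℝ)..1, u s) = 0 →
      (∀ t ∈ Icc (0:ℝ) 1, |∫ s in (0:ℝ)..t, u s| < ρ) →
      0 ≤ ∫ t in (0:ℝ)..1, (∫ s in (0:ℝ)..t, u s) * g (u t)) :
    ∃ ε > (0:ℝ), ∃ c : ℝ, ∀ v ∈ Icc (-ε) ε, g v = c * v := by
  obtain ⟨ρ, hρ, hmin⟩ := hmin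
  obtain ⟨ε, hε, hεU⟩ :=
    Metric.nhds_basis_closedBall.mem_iff.1 (mem_interior_iff_mem_nhds.1 hU)
  rw [Real.closedBall_zero_eq_Icc] at hεU
  refine ⟨ε, hε, g ε / ε, eq_div_mul_of_mul_eq_mul hε hg0 fun p hp q hq hpq ↦ ?_⟩
  exact IsStrongMinOfZero.mul_apply_eq_mul_apply hmin hρ (interior_subset hU) hg0 (hεU hp)
    (hεU hq) hpq

/-- **Example 2 (Proposition):** if the zero pair delivers a strong minimum for
`∫₀¹ x g(u) dt → inf`, `ẋ = u`, `x(0) = x(1) = 0`, `u(t) ∈ U` a.e., with `0 ∈ int U`,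
`g` continuous, `g(0) = 0`, then `g` is linear on an interval centered at `0`. -/
theorem example_two
    (U : Set ℝ) (hU : (0 : ℝ) ∈ interior U)
    (g : ℝ → ℝ) (hg : Continuous g) (hg0 : g 0 = 0)
    (hmin : ∃ ρ > (0:ℝ), ∀ u : ℝ → ℝ, Measurable u →
      (∃ C : ℝ, ∀ᵐ t ∂(volume.restrict (Icc (0:ℝ) 1)), |u t| ≤ C) →
      (∀ᵐ t ∂(volume.restrict (Icc (0:ℝ) 1)), u t ∈ U) →
      (∫ s in (0:ℝ)..1, u s) = 0 →
      (∀ t ∈ Icc (0:ℝ) 1, |∫ s in (0:ℝ)..t, u s| < ρ) →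
      0 ≤ ∫ t in (0:ℝ)..1, (∫ s in (0:ℝ)..t, u s) * g (u t)) :
    ∃ ε > (0:ℝ), ∃ c : ℝ, ∀ v ∈ Icc (-ε) ε, g v = c * v :=
  example_two_general U hU g hg0 hmin
end
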